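/- arXiv:1709.10342 — 5 statements merged into one kernel-verified Lean document; each statement's English description precedes it below -/
import Mathlib

section
/- For any μ ∈ V ∖ {0}, the image under the diagonal-part map of the moment map evaluated on the nonzero part of the closure of the T-orbit of μ equals the convex hull of the weights of μ: Diag(m((closure of T·μ in V) ∖ {0})) = CH_μ. -/
open scoped BigOperators

namespace RNPaper

/-- Structure constants of a skew-symmetric algebra on `ℝⁿ`:
an element of `V = Λ²(ℝⁿ)*⊗ℝⁿ` written in the basis `μ_{ijk}`. -/
abbrev SC (n : ℕ) := Fin n → Fin n → Fin n → ℝ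

variable {n : ℕ}

def IsAntisym (c : SC n) : Prop := ∀ i j k, c j i k = - c i j k

/-- The bilinear map `ℝⁿ×ℝⁿ→ℝⁿ` associated to the structure constants `c`. -/
def br (c : SC n) (x y : Fin n → ℝ) : Fin n → ℝ :=
  fun k => ∑ i, ∑ j, x i * y j * c i j k

def IsJacobi (c : SC n) : Prop :=
  ∀ x y z : Fin n → ℝ,
    br c (br c x y) z + br c (br c y z) x + br c (br c z x) y = 0

def nest (c : SC n) (v : ℕ → (Fin n → ℝ)) : ℕ → (Fin n → ℝ)
  | 0 => v 0
  | k + 1 => br c (v (k + 1)) (nest c v k)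

def IsNilpotentBracket (c : SC n) : Prop :=
  ∃ N : ℕ, ∀ v : ℕ → (Fin n → ℝ), nest c v N = 0

/-- `c` is the Lie bracket of a nilpotent Lie algebra. -/
def IsNilpotentLie (c : SC n) : Prop := IsAntisym c ∧ IsJacobi c ∧ IsNilpotentBracket c

/-- `D` is a derivation of the algebra with structure constants `c`. -/
def IsDeriv (c : SC n) (D : Matrix (Fin n) (Fin n) ℝ) : Prop :=
  ∀ x y : Fin n → ℝ,
    D.mulVec (br c x y) = br c (D.mulVec x) y + br c x (D.mulVec y)

/-- The inner product on `V` making the basis `μ_{ijk}` (`i<j`) orthonormal. -/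
def innerV (c d : SC n) : ℝ := ∑ i, ∑ j, ∑ k, if i < j then c i j k * d i j k else 0

/-- The inner product `⟨A,B⟩ = tr(ABᵀ)` on matrices. -/
def innerM (A B : Matrix (Fin n) (Fin n) ℝ) : ℝ := ∑ a, ∑ b, A a b * B a b

/-- The `gl(n,ℝ)`-action `E·μ = Eμ(·,·) − μ(E·,·) − μ(·,E·)`. -/
def lieAct (E : Matrix (Fin n) (Fin n) ℝ) (c : SC n) : SC n :=
  fun i j k => (∑ l, E k l * c i j l) - (∑ p, E p i * c p j k) - (∑ p, E p j * c i p k)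

/-- The `GL(n,ℝ)`-action `(g·μ)(v,w) = g μ(g⁻¹v, g⁻¹w)` in structure constants. -/
def glAct (g : GL (Fin n) ℝ) (c : SC n) : SC n :=
  fun i j k => ∑ p, ∑ q, ∑ l,
    ((g⁻¹ : GL (Fin n) ℝ) : Matrix (Fin n) (Fin n) ℝ) p i
      * ((g⁻¹ : GL (Fin n) ℝ) : Matrix (Fin n) (Fin n) ℝ) q j
      * ((g : Matrix (Fin n) (Fin n) ℝ) k l) * c p q l

/-- `m` is the moment map: `⟨m(μ),E⟩ = |μ|⁻²⟨E·μ,μ⟩` for all symmetric `E` and `μ ≠ 0`,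
with `m(μ)` a symmetric matrix. -/
def IsMomentMap (m : SC n → Matrix (Fin n) (Fin n) ℝ) : Prop :=
  ∀ c : SC n, c ≠ 0 →
    (m c).IsSymm ∧
      ∀ E : Matrix (Fin n) (Fin n) ℝ, E.IsSymm →
        innerM (m c) E = (innerV c c)⁻¹ * innerV (lieAct E c) c

/-- The centralizer of `D` in `GL(n,ℝ)`. -/
def centralizerSet (D : Matrix (Fin n) (Fin n) ℝ) : Set (GL (Fin n) ℝ) :=
  {g | (g : Matrix (Fin n) (Fin n) ℝ) * D = D * (g : Matrix (Fin n) (Fin n) ℝ)}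

lemma one_mem_centralizerSet (D : Matrix (Fin n) (Fin n) ℝ) :
    (1 : GL (Fin n) ℝ) ∈ centralizerSet D := by
  simp [centralizerSet]

/-- `G_D`: the identity component of the centralizer of `D` in `GL(n,ℝ)`. -/
def GD (D : Matrix (Fin n) (Fin n) ℝ) : Set (GL (Fin n) ℝ) :=
  Subtype.val '' connectedComponent (⟨1, one_mem_centralizerSet D⟩ : centralizerSet D)

/-- The orbit of `c` under a set `S ⊆ GL(n,ℝ)`. -/
def orbitOf (S : Set (GL (Fin n) ℝ)) (c : SC n) : Set (SC n) :=
  (fun g => glAct g c) '' S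

noncomputable def diagAct (d : Fin n → ℝ) (c : SC n) : SC n :=
  fun i j k => (d k / (d i * d j)) * c i j k

/-- The orbit `T·μ` of the subgroup of diagonal matrices with positive entries. -/
def Torbit (c : SC n) : Set (SC n) :=
  {x | ∃ d : Fin n → ℝ, (∀ i, 0 < d i) ∧ x = diagAct d c}

/-- The weight `F_{ij}^k = E_kk − E_ii − E_jj`. -/
def Fwt (i j k : Fin n) : Matrix (Fin n) (Fin n) ℝ :=
  Matrix.single k k 1 - Matrix.single i i 1 - Matrix.single j j 1

/-- `CH_μ`: the convex hull of the weights of `μ`. -/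
def CHmu (c : SC n) : Set (Matrix (Fin n) (Fin n) ℝ) :=
  convexHull ℝ {M | ∃ i j k : Fin n, i < j ∧ c i j k ≠ 0 ∧ M = Fwt i j k}

/-- The diagonal part of a matrix. -/
def diagPart (A : Matrix (Fin n) (Fin n) ℝ) : Matrix (Fin n) (Fin n) ℝ :=
  Matrix.diagonal fun i => A i i

/-- Membership in `𝔱ⁿ_{>0}`, the diagonal matrices with positive diagonal entries. -/
def DiagPos (E : Matrix (Fin n) (Fin n) ℝ) : Prop :=
  ∃ d : Fin n → ℝ, (∀ i, 0 < d i) ∧ E = Matrix.diagonal d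

/-- The basis is nice for the bracket `c`. -/
def IsNice (c : SC n) : Prop :=
  (∀ i j k l, c i j k ≠ 0 → c i j l ≠ 0 → k = l) ∧
  ∀ i j r s k, c i j k ≠ 0 → c r s k ≠ 0 →
    ({i, j} : Finset (Fin n)) = {r, s} ∨
      Disjoint ({i, j} : Finset (Fin n)) ({r, s} : Finset (Fin n))

/-- `A` is diagonalizable over `ℝ`. -/
def IsDiagonalizableR {N : ℕ} (A : Matrix (Fin N) (Fin N) ℝ) : Prop :=
  ∃ g : GL (Fin N) ℝ, ∃ d : Fin N → ℝ,
    A = (g : Matrix (Fin N) (Fin N) ℝ) * Matrix.diagonal d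
      * ((g⁻¹ : GL (Fin N) ℝ) : Matrix (Fin N) (Fin N) ℝ)

/-- `D` extended by zero to `𝔰_D = ℝf ⊕ 𝔫` (index `0` corresponds to `f`). -/
def Dext (D : Matrix (Fin n) (Fin n) ℝ) : Matrix (Fin (n + 1)) (Fin (n + 1)) ℝ :=
  Matrix.of (Fin.cons (fun _ => (0 : ℝ)) (fun k => Fin.cons (0 : ℝ) (fun j => D k j)))

/-- The bracket of `𝔫` extended by zero to `𝔰_D = ℝf ⊕ 𝔫`. -/
def cext (c : SC n) : SC (n + 1) :=
  Fin.cons (fun _ _ => 0)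
    (fun i => Fin.cons (fun _ => 0) (fun j => Fin.cons 0 (fun k => c i j k)))

/-- Structure constants of the solvable extension `𝔰_D = ℝf ⊕ 𝔫`, `[f,X] = D X`. -/
def solvSC (D : Matrix (Fin n) (Fin n) ℝ) (c : SC n) : SC (n + 1) :=
  fun i j k =>
    (if i = 0 then Dext D k j else 0) - (if j = 0 then Dext D k i else 0) + cext c i j k

/-- The matrix of `ad X`. -/
def adM {N : ℕ} (γ : SC N) (X : Fin N → ℝ) : Matrix (Fin N) (Fin N) ℝ :=
  Matrix.of fun k j => ∑ i, X i * γ i j k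

/-- The bilinear form with Gram matrix `P`. -/
def bip {N : ℕ} (P : Matrix (Fin N) (Fin N) ℝ) (x y : Fin N → ℝ) : ℝ :=
  dotProduct x (P.mulVec y)

/-- `⟨Ric X,Y⟩` computed via the orthonormal basis `u`:
`−½Σ⟨[X,uₐ],[Y,uₐ]⟩ + ¼ΣΣ⟨[uₐ,u_b],X⟩⟨[uₐ,u_b],Y⟩ − ½ tr(ad X ∘ ad Y)
 − ½(⟨[H,X],Y⟩+⟨[H,Y],X⟩)`. -/
noncomputable def ricForm {N : ℕ} (γ : SC N) (P : Matrix (Fin N) (Fin N) ℝ)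
    (u : Fin N → (Fin N → ℝ)) (H : Fin N → ℝ) (X Y : Fin N → ℝ) : ℝ :=
  -(1 / 2) * (∑ a, bip P (br γ X (u a)) (br γ Y (u a)))
    + (1 / 4) * (∑ a, ∑ b, bip P (br γ (u a) (u b)) X * bip P (br γ (u a) (u b)) Y)
    - (1 / 2) * Matrix.trace (adM γ X * adM γ Y)
    - (1 / 2) * (bip P (br γ H X) Y + bip P (br γ H Y) X)

/-- `D` is a Ricci negative derivation of `𝔫`: the solvable extension `𝔰_D = ℝf ⊕ 𝔫`
admits an inner product (with Gram matrix `P`) such that `f ⟂ 𝔫`, `D` is symmetric,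
and the Ricci operator is negative definite. -/
def IsRicciNegative (c : SC n) (D : Matrix (Fin n) (Fin n) ℝ) : Prop :=
  ∃ P : Matrix (Fin (n + 1)) (Fin (n + 1)) ℝ, P.PosDef ∧
    (∀ j : Fin n, P 0 j.succ = 0) ∧
    (Dext D).transpose * P = P * Dext D ∧
    ∃ u : Fin (n + 1) → (Fin (n + 1) → ℝ),
      (∀ a b, bip P (u a) (u b) = if a = b then 1 else 0) ∧
      ∃ H : Fin (n + 1) → ℝ,
        (∀ X : Fin (n + 1) → ℝ, bip P H X = Matrix.trace (adM (solvSC D c) X)) ∧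
        ∀ X : Fin (n + 1) → ℝ, X ≠ 0 → ricForm (solvSC D c) P u H X X < 0

/-- The bracket `[e_i,e_j] = v e_k` (and `[e_j,e_i] = −v e_k`) as an element of `V`. -/
def brk {N : ℕ} (i j k : Fin N) (v : ℝ) : SC N :=
  fun p q r =>
    if p = i ∧ q = j ∧ r = k then v else if p = j ∧ q = i ∧ r = k then -v else 0

end RNPaper

/-!
`E_aa` acts on `μ_{ijk}` by the scalar `(F_{ij}^k)_aa`, so `Diag(m(μ))` is the barycenter of the
weights `F_{ij}^k` with masses `μ_{ijk}²`. Points of the closure of `T·μ` are antisymmetric and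
supported where `μ` is, which gives `⊆`. Conversely, `diag(d)·μ` with `d = exp (x / 2)` has masses
`(c_{ij}^k)² exp (x_k - x_i - x_j)`, and by Birch's theorem (a minimum of the coercive function
`φ ↦ ∑ c² exp (φ (F - p))` is a critical point) every strictly positive convex combination `p` of
the weights is attained on the orbit itself. These points are dense in `CH_μ`, and the image of the
orbit closure is closed: by scale invariance it is the image of the compact slice `‖μ‖ = 1`.
-/

open Finset Real

section Birch

variable {ι : Type*} [Fintype ι] {a τ : ι → ℝ}

lemma le_log_div_of_sum_mul_exp_le (ha : ∀ s, 0 < a s) {y : ι → ℝ} {A : ℝ}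
    (hy : ∑ t, a t * exp (y t) ≤ A) (s : ι) : y s ≤ log (A / a s) := by
  have hs : a s * exp (y s) ≤ A :=
    (single_le_sum (fun t _ => (mul_pos (ha t) (exp_pos _)).le) (mem_univ s)).trans hy
  rw [le_log_iff_exp_le (div_pos ((mul_pos (ha s) (exp_pos _)).trans_le hs) (ha s)),
    le_div_iff₀ (ha s), mul_comm]
  exact hs

lemma sub_div_le_of_sum_mul_eq_zero (hτ : ∀ s, 0 < τ s) {y u : ι → ℝ}
    (hy : ∑ t, τ t * y t = 0) (hyu : ∀ t, y t ≤ u t) (s : ι) :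
    u s - (∑ t, τ t * u t) / τ s ≤ y s := by
  have h : τ s * (u s - y s) ≤ ∑ t, τ t * (u t - y t) :=
    single_le_sum (fun t _ => mul_nonneg (hτ t).le (sub_nonneg.2 (hyu t))) (mem_univ s)
  simp only [mul_sub, sum_sub_distrib, hy, sub_zero] at h
  rw [sub_le_comm, le_div_iff₀ (hτ s)]
  linarith

/-- The sublevel set `{F ≤ F 0}` in `Y` is compact: it bounds every `y s` from above, and then the
hyperplane equation `∑ τ s * y s = 0` bounds it from below. -/
lemma exists_isMinOn_sum_exp (ha : ∀ s, 0 < a s) (hτ : ∀ s, 0 < τ s)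
    (Y : Submodule ℝ (ι → ℝ)) (hY : ∀ y ∈ Y, ∑ s, τ s * y s = 0) :
    ∃ y ∈ Y, IsMinOn (fun y : ι → ℝ => ∑ s, a s * exp (y s)) Y y := by
  set F : (ι → ℝ) → ℝ := fun y => ∑ s, a s * exp (y s)
  set u : ι → ℝ := fun s => log (F 0 / a s)
  set K : Set (ι → ℝ) := (Y : Set (ι → ℝ)) ∩ {y | F y ≤ F 0}
  have hF : Continuous F := by fun_prop
  have hK : IsCompact K := by
    refine (isCompact_univ_pi fun s => isCompact_Icc
      (a := u s - (∑ t, τ t * u t) / τ s) (b := u s)).of_isClosed_subset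
      (Y.closed_of_finiteDimensional.inter (isClosed_le hF continuous_const)) ?_
    rintro y ⟨hyY, hyF⟩ s -
    have hyu := le_log_div_of_sum_mul_exp_le ha hyF
    exact ⟨sub_div_le_of_sum_mul_eq_zero hτ (hY y hyY) hyu s, hyu s⟩
  have h0K : (0 : ι → ℝ) ∈ K := ⟨Y.zero_mem, le_refl (F 0)⟩
  obtain ⟨y, hyK, hmin⟩ := hK.exists_isMinOn ⟨0, h0K⟩ hF.continuousOn
  refine ⟨y, hyK.1, fun z hz => ?_⟩
  by_cases hzF : F z ≤ F 0
  · exact hmin ⟨hz, hzF⟩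
  · exact (hmin h0K).trans (le_of_not_ge hzF)

lemma sum_exp_mul_eq_zero_of_isMinOn {Y : Submodule ℝ (ι → ℝ)} {y : ι → ℝ} (hyY : y ∈ Y)
    (hmin : IsMinOn (fun y : ι → ℝ => ∑ s, a s * exp (y s)) Y y) {z : ι → ℝ} (hz : z ∈ Y) :
    ∑ s, a s * exp (y s) * z s = 0 := by
  have hloc : IsLocalMin (fun t : ℝ => ∑ s, a s * exp (y s + t * z s)) 0 :=
    Filter.Eventually.of_forall fun t => by
      simpa using hmin (Y.add_mem hyY (Y.smul_mem t hz))
  refine hloc.hasDerivAt_eq_zero ?_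
  have := HasDerivAt.fun_sum (u := univ) (x := (0 : ℝ)) fun s _ =>
    ((((hasDerivAt_id (0 : ℝ)).mul_const (z s)).const_add (y s)).exp).const_mul (a s)
  simpa [mul_assoc] using this

variable {E : Type*} [AddCommGroup E] [Module ℝ E]

lemma exists_dual_sum_exp_smul_eq_zero (ha : ∀ s, 0 < a s) (hτ : ∀ s, 0 < τ s) {v : ι → E}
    (hv : ∑ s, τ s • v s = 0) :
    ∃ φ : Module.Dual ℝ E, ∑ s, (a s * exp (φ (v s))) • v s = 0 := by
  set Λ : Module.Dual ℝ E →ₗ[ℝ] ι → ℝ := LinearMap.pi fun s => Module.Dual.eval ℝ E (v s)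
  have hY : ∀ y ∈ LinearMap.range Λ, ∑ s, τ s * y s = 0 := by
    rintro _ ⟨φ, rfl⟩
    simpa [Λ, map_sum, map_smul] using congrArg φ hv
  obtain ⟨y, hy, hmin⟩ := exists_isMinOn_sum_exp ha hτ _ hY
  obtain ⟨φ, rfl⟩ := LinearMap.mem_range.1 hy
  refine ⟨φ, (Module.forall_dual_apply_eq_zero_iff ℝ _).1 fun ψ => ?_⟩
  have := sum_exp_mul_eq_zero_of_isMinOn hy hmin (LinearMap.mem_range_self Λ ψ)
  simpa [Λ, map_sum, map_smul, mul_comm] using this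

lemma Finset.centerMass_eq_of_sum_smul_sub_eq_zero {κ : Type*} {t : Finset κ} {w : κ → ℝ}
    {z : κ → E} {p : E} (hw : ∑ i ∈ t, w i ≠ 0) (h : ∑ i ∈ t, w i • (z i - p) = 0) :
    t.centerMass w z = p := by
  simp only [smul_sub, sum_sub_distrib, ← sum_smul, sub_eq_zero] at h
  rw [Finset.centerMass, h, inv_smul_smul₀ hw]

/-- Birch's theorem. -/
lemma exists_dual_centerMass_eq (w : ι → E) (ha : ∀ s, 0 < a s) (hτ : ∀ s, 0 < τ s) :
    ∃ φ : Module.Dual ℝ E,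
      univ.centerMass (fun s => a s * exp (φ (w s))) w = univ.centerMass τ w := by
  rcases isEmpty_or_nonempty ι with hι | hι
  · exact ⟨0, by simp [Finset.centerMass, univ_eq_empty]⟩
  have hpos : ∀ b : ι → ℝ, (∀ s, 0 < b s) → ∑ s, b s ≠ 0 := fun b hb =>
    (sum_pos (fun s _ => hb s) univ_nonempty).ne'
  set p := univ.centerMass τ w
  have hv : ∑ s, τ s • (w s - p) = 0 := by
    simp only [smul_sub, sum_sub_distrib, ← sum_smul, p, Finset.centerMass,
      smul_inv_smul₀ (hpos τ hτ), sub_self]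
  obtain ⟨φ, hφ⟩ := exists_dual_sum_exp_smul_eq_zero ha hτ hv
  have hb : (fun s => a s * exp (φ (w s))) = exp (φ p) • fun s => a s * exp (φ (w s - p)) := by
    ext s
    simp only [map_sub, exp_sub, Pi.smul_apply, smul_eq_mul]
    field_simp
  refine ⟨φ, ?_⟩
  rw [hb, Finset.centerMass_smul_left (hc := (exp_pos _).ne')]
  exact Finset.centerMass_eq_of_sum_smul_sub_eq_zero
    (hpos _ fun s => mul_pos (ha s) (exp_pos _)) hφ

lemma stdSimplex_subset_closure :
    stdSimplex ℝ ι ⊆ closure {τ : ι → ℝ | (∀ s, 0 < τ s) ∧ ∑ s, τ s = 1} := by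
  intro τ hτ
  have : Nonempty ι := by
    by_contra! h
    simpa using hτ.2
  set q : ι → ℝ := fun _ => (Fintype.card ι : ℝ)⁻¹
  refine closure_mono ?_ (segment_subset_closure_openSegment (left_mem_segment ℝ τ q))
  rintro _ ⟨α, β, hα, hβ, hαβ, rfl⟩
  refine ⟨fun s => ?_, ?_⟩
  · have := hτ.1 s
    simp only [Pi.add_apply, Pi.smul_apply, smul_eq_mul, q]
    positivity
  · have : (Fintype.card ι : ℝ) ≠ 0 := by positivity
    simp [sum_add_distrib, ← mul_sum, hτ.2, q, mul_left_comm _ β, this, hαβ]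

end Birch

namespace RNPaper

variable {n : ℕ}

lemma Fwt_apply (i j k a b : Fin n) : Fwt i j k a b =
    if a = b then (if k = a then 1 else 0) - (if i = a then 1 else 0) - (if j = a then 1 else 0)
    else 0 := by
  simp only [Fwt, Matrix.sub_apply, Matrix.single_apply]
  grind

lemma lieAct_single_self (a : Fin n) (μ : SC n) (i j k : Fin n) :
    lieAct (Matrix.single a a 1) μ i j k = Fwt i j k a a * μ i j k := by
  simp [lieAct, Fwt_apply, Matrix.single_apply, ite_and]
  split_ifs <;> subst_vars <;> grind

lemma isSymm_single_self (a : Fin n) : (Matrix.single a a (1 : ℝ)).IsSymm := by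
  simp [Matrix.IsSymm, Matrix.transpose_single]

lemma innerM_single_self (A : Matrix (Fin n) (Fin n) ℝ) (a : Fin n) :
    innerM A (Matrix.single a a 1) = A a a := by
  simp [innerM, Matrix.single_apply, ite_and]

lemma diagPart_eq_of_isMomentMap {m : SC n → Matrix (Fin n) (Fin n) ℝ} (hm : IsMomentMap m)
    {μ : SC n} (hμ : μ ≠ 0) :
    diagPart (m μ) = (innerV μ μ)⁻¹ •
      ∑ i, ∑ j, ∑ k, if i < j then (μ i j k * μ i j k) • Fwt i j k else 0 := by
  ext a b
  rcases eq_or_ne a b with rfl | hab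
  · have h := (hm μ hμ).2 _ (isSymm_single_self a)
    rw [innerM_single_self] at h
    simp only [diagPart, Matrix.diagonal_apply_eq, h, innerV, lieAct_single_self,
      Matrix.smul_apply, Matrix.sum_apply, smul_eq_mul, Matrix.zero_apply,
      apply_ite (fun M : Matrix (Fin n) (Fin n) ℝ => M a a)]
    congr 1
    refine sum_congr rfl fun i _ => sum_congr rfl fun j _ => sum_congr rfl fun k _ => ?_
    split_ifs <;> ring
  · simp [diagPart, hab, Matrix.sum_apply, Fwt_apply,
      apply_ite (fun M : Matrix (Fin n) (Fin n) ℝ => M a b)]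

abbrev SuppIdx (c : SC n) := {s : Fin n × Fin n × Fin n // s.1 < s.2.1 ∧ c s.1 s.2.1 s.2.2 ≠ 0}

def weight (c : SC n) (s : SuppIdx c) : Matrix (Fin n) (Fin n) ℝ := Fwt s.1.1 s.1.2.1 s.1.2.2

noncomputable def weightCenterMass (c μ : SC n) : Matrix (Fin n) (Fin n) ℝ :=
  univ.centerMass (fun s : SuppIdx c => μ s.1.1 s.1.2.1 s.1.2.2 ^ 2) (weight c)

lemma sum_lt_eq_sum_suppIdx {M : Type*} [AddCommMonoid M] {c : SC n}
    (f : Fin n → Fin n → Fin n → M) (hf : ∀ i j k, c i j k = 0 → f i j k = 0) :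
    ∑ i, ∑ j, ∑ k, (if i < j then f i j k else 0) =
      ∑ s : SuppIdx c, f s.1.1 s.1.2.1 s.1.2.2 := by
  classical
  rw [← sum_subtype (univ.filter fun s : Fin n × Fin n × Fin n =>
      s.1 < s.2.1 ∧ c s.1 s.2.1 s.2.2 ≠ 0) (by simp) (fun s => f s.1 s.2.1 s.2.2),
    sum_filter, Fintype.sum_prod_type]
  refine sum_congr rfl fun i _ => ?_
  rw [Fintype.sum_prod_type]
  refine sum_congr rfl fun j _ => sum_congr rfl fun k _ => ?_
  by_cases hc : c i j k = 0 <;> simp [hc, hf]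

lemma diagPart_eq_weightCenterMass {m : SC n → Matrix (Fin n) (Fin n) ℝ} (hm : IsMomentMap m)
    {c μ : SC n} (hμ : μ ≠ 0) (hsupp : ∀ i j k, c i j k = 0 → μ i j k = 0) :
    diagPart (m μ) = weightCenterMass c μ := by
  rw [diagPart_eq_of_isMomentMap hm hμ, innerV, weightCenterMass,
    sum_lt_eq_sum_suppIdx (c := c) _ fun i j k h => by simp [hsupp i j k h],
    sum_lt_eq_sum_suppIdx (c := c) _ fun i j k h => by simp [hsupp i j k h]]
  simp [Finset.centerMass, weight, sq]

lemma antisym_and_supp_of_mem_closure_torbit {c μ : SC n} (hanti : IsAntisym c)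
    (hμ : μ ∈ closure (Torbit c)) :
    IsAntisym μ ∧ ∀ i j k, c i j k = 0 → μ i j k = 0 := by
  have hclosed : IsClosed {μ : SC n | IsAntisym μ ∧ ∀ i j k, c i j k = 0 → μ i j k = 0} := by
    simp only [IsAntisym, Set.ofPred_and, Set.ofPred_forall]
    exact (isClosed_iInter fun i => isClosed_iInter fun j => isClosed_iInter fun k =>
      isClosed_eq (by fun_prop) (by fun_prop)).inter
      (isClosed_iInter fun i => isClosed_iInter fun j => isClosed_iInter fun k =>
        isClosed_iInter fun _ => isClosed_eq (by fun_prop) continuous_const)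
  refine closure_minimal ?_ hclosed hμ
  rintro _ ⟨d, -, rfl⟩
  exact ⟨fun i j k => by simp [diagAct, hanti i j k, mul_comm], fun i j k h => by simp [diagAct, h]⟩

lemma sum_sq_suppIdx_pos {c μ : SC n} (hanti : IsAntisym μ)
    (hsupp : ∀ i j k, c i j k = 0 → μ i j k = 0) (hμ : μ ≠ 0) :
    0 < ∑ s : SuppIdx c, μ s.1.1 s.1.2.1 s.1.2.2 ^ 2 := by
  have key : ∀ i j k, i < j → μ i j k ≠ 0 → 0 < ∑ s : SuppIdx c, μ s.1.1 s.1.2.1 s.1.2.2 ^ 2 :=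
    fun i j k hij h => sum_pos' (fun s _ => sq_nonneg _)
      ⟨⟨(i, j, k), hij, fun hc => h (hsupp i j k hc)⟩, mem_univ _, pow_two_pos_of_ne_zero h⟩
  obtain ⟨i, j, k, h⟩ : ∃ i j k, μ i j k ≠ 0 := by
    by_contra! h
    exact hμ (funext fun i => funext fun j => funext (h i j))
  rcases lt_trichotomy i j with hij | rfl | hij
  · exact key i j k hij h
  · exact absurd (by linarith [hanti i i k] : μ i i k = 0) h
  · exact key j i k hij (by rw [hanti]; exact neg_ne_zero.2 h)

lemma smul_mem_torbit {c μ : SC n} {r : ℝ} (hr : 0 < r) (hμ : μ ∈ Torbit c) :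
    r • μ ∈ Torbit c := by
  obtain ⟨d, hd, rfl⟩ := hμ
  refine ⟨fun i => d i / r, fun i => div_pos (hd i) hr, ?_⟩
  ext i j k
  have := (hd i).ne'
  have := (hd j).ne'
  simp only [Pi.smul_apply, smul_eq_mul, diagAct]
  field_simp

lemma smul_mem_closure_torbit {c μ : SC n} {r : ℝ} (hr : 0 < r) (hμ : μ ∈ closure (Torbit c)) :
    r • μ ∈ closure (Torbit c) :=
  map_mem_closure (continuous_const_smul r) hμ fun _ => smul_mem_torbit hr

lemma weightCenterMass_smul (c μ : SC n) {r : ℝ} (hr : r ≠ 0) :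
    weightCenterMass c (r • μ) = weightCenterMass c μ := by
  have hw : (fun s : SuppIdx c => (r • μ) s.1.1 s.1.2.1 s.1.2.2 ^ 2) =
      r ^ 2 • fun s : SuppIdx c => μ s.1.1 s.1.2.1 s.1.2.2 ^ 2 := by
    ext s
    simp [mul_pow]
  rw [weightCenterMass, hw, centerMass_smul_left (hc := pow_ne_zero 2 hr), weightCenterMass]

lemma continuousOn_weightCenterMass (c : SC n) :
    ContinuousOn (weightCenterMass c) {μ | ∑ s : SuppIdx c, μ s.1.1 s.1.2.1 s.1.2.2 ^ 2 ≠ 0} := by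
  unfold weightCenterMass Finset.centerMass
  exact ContinuousOn.smul (ContinuousOn.inv₀ (by fun_prop) fun μ hμ => hμ) (by fun_prop)

lemma isClosed_image_weightCenterMass {c : SC n} (hanti : IsAntisym c) :
    IsClosed (weightCenterMass c '' (closure (Torbit c) \ {0})) := by
  have hK : IsCompact (closure (Torbit c) ∩ Metric.sphere 0 1) :=
    (isCompact_sphere 0 1).inter_left isClosed_closure
  have himage : weightCenterMass c '' (closure (Torbit c) \ {0}) =
      weightCenterMass c '' (closure (Torbit c) ∩ Metric.sphere 0 1) := by
    refine subset_antisymm ?_ (Set.image_mono fun μ hμ => ⟨hμ.1, ?_⟩)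
    · rintro _ ⟨μ, ⟨hμT, hμ0⟩, rfl⟩
      have hμ : 0 < ‖μ‖ := norm_pos_iff.2 hμ0
      refine ⟨‖μ‖⁻¹ • μ, ⟨smul_mem_closure_torbit (inv_pos.2 hμ) hμT, ?_⟩,
        weightCenterMass_smul c μ (inv_pos.2 hμ).ne'⟩
      simp [norm_smul, hμ.ne']
    · rintro rfl
      simp at hμ
  rw [himage]
  refine (hK.image_of_continuousOn ((continuousOn_weightCenterMass c).mono ?_)).isClosed
  rintro μ ⟨hμT, hμ1⟩
  have ⟨hμa, hsupp⟩ := antisym_and_supp_of_mem_closure_torbit hanti hμT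
  exact (sum_sq_suppIdx_pos hμa hsupp (by rintro rfl; simp at hμ1)).ne'

lemma weightCenterMass_mem_CHmu {c μ : SC n} (hanti : IsAntisym c)
    (hμ : μ ∈ closure (Torbit c) \ {0}) : weightCenterMass c μ ∈ CHmu c := by
  have ⟨hμa, hsupp⟩ := antisym_and_supp_of_mem_closure_torbit hanti hμ.1
  refine centerMass_mem_convexHull _ (fun s _ => sq_nonneg _) (sum_sq_suppIdx_pos hμa hsupp hμ.2)
    fun s _ => ⟨s.1.1, s.1.2.1, s.1.2.2, s.2.1, s.2.2, rfl⟩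

lemma CHmu_eq_image_stdSimplex (c : SC n) :
    CHmu c = Fintype.linearCombination ℝ (weight c) '' stdSimplex ℝ (SuppIdx c) := by
  classical
  have hrange :
      {M | ∃ i j k : Fin n, i < j ∧ c i j k ≠ 0 ∧ M = Fwt i j k} = Set.range (weight c) := by
    ext M
    constructor
    · rintro ⟨i, j, k, hij, hc, rfl⟩
      exact ⟨⟨(i, j, k), hij, hc⟩, rfl⟩
    · rintro ⟨s, rfl⟩
      exact ⟨s.1.1, s.1.2.1, s.1.2.2, s.2.1, s.2.2, rfl⟩
  rw [CHmu, hrange, ← convexHull_basis_eq_stdSimplex, LinearMap.image_convexHull,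
    ← Set.range_comp]
  congr 2
  ext s : 1
  simp [Fintype.linearCombination_apply]

lemma exists_mem_torbit_weightCenterMass_eq {c : SC n} {τ : SuppIdx c → ℝ}
    (hτ : ∀ s, 0 < τ s) :
    ∃ μ ∈ Torbit c, weightCenterMass c μ = univ.centerMass τ (weight c) := by
  obtain ⟨φ, hφ⟩ := exists_dual_centerMass_eq (weight c)
    (fun s => pow_two_pos_of_ne_zero s.2.2) hτ
  set x : Fin n → ℝ := fun a => φ (Matrix.single a a 1)
  refine ⟨diagAct (fun a => exp (x a / 2)) c, ⟨_, fun a => exp_pos _, rfl⟩, ?_⟩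
  rw [← hφ, weightCenterMass]
  congr 1
  ext ⟨⟨i, j, k⟩, -⟩
  have hexp : exp (x k / 2) / (exp (x i / 2) * exp (x j / 2)) = exp ((x k - x i - x j) / 2) := by
    rw [← exp_add, ← exp_sub]
    ring_nf
  simp only [diagAct, weight, Fwt, map_sub, hexp, mul_pow, ← exp_nat_mul, x]
  ring_nf

lemma ne_zero_of_mem_torbit {c μ : SC n} (hc : c ≠ 0) (hμ : μ ∈ Torbit c) : μ ≠ 0 := by
  obtain ⟨d, hd, rfl⟩ := hμ
  refine fun h => hc (funext fun i => funext fun j => funext fun k => ?_)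
  have hijk : d k / (d i * d j) * c i j k = 0 := congrFun (congrFun (congrFun h i) j) k
  exact (mul_eq_zero.1 hijk).resolve_left (div_pos (hd k) (mul_pos (hd i) (hd j))).ne'

lemma CHmu_subset_image_weightCenterMass {c : SC n} (hanti : IsAntisym c) :
    CHmu c ⊆ weightCenterMass c '' (closure (Torbit c) \ {0}) := by
  set L := Fintype.linearCombination ℝ (weight c)
  have hopen : L '' {τ | (∀ s, 0 < τ s) ∧ ∑ s, τ s = 1} ⊆
      weightCenterMass c '' (closure (Torbit c) \ {0}) := by
    rintro _ ⟨τ, ⟨hτ, hτ1⟩, rfl⟩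
    obtain ⟨s⟩ : Nonempty (SuppIdx c) := by
      by_contra! h
      simp at hτ1
    obtain ⟨μ, hμ, hμτ⟩ := exists_mem_torbit_weightCenterMass_eq hτ
    refine ⟨μ, ⟨subset_closure hμ, ne_zero_of_mem_torbit (fun h => s.2.2 (by simp [h])) hμ⟩, ?_⟩
    rw [hμτ, centerMass_eq_of_sum_1 _ _ hτ1, Fintype.linearCombination_apply]
  calc CHmu c = L '' stdSimplex ℝ (SuppIdx c) := CHmu_eq_image_stdSimplex c
    _ ⊆ L '' closure {τ | (∀ s, 0 < τ s) ∧ ∑ s, τ s = 1} :=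
      Set.image_mono stdSimplex_subset_closure
    _ ⊆ closure (L '' {τ | (∀ s, 0 < τ s) ∧ ∑ s, τ s = 1}) :=
      image_closure_subset_closure_image (LinearMap.continuous_of_finiteDimensional L)
    _ ⊆ closure (weightCenterMass c '' (closure (Torbit c) \ {0})) := closure_mono hopen
    _ = weightCenterMass c '' (closure (Torbit c) \ {0}) :=
      (isClosed_image_weightCenterMass hanti).closure_eq

theorem statement3_general {n : ℕ} (c : SC n) (hanti : IsAntisym c)
    (m : SC n → Matrix (Fin n) (Fin n) ℝ) (hm : IsMomentMap m) :
    diagPart '' (m '' (closure (Torbit c) \ {0})) = CHmu c := by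
  have hdiag : diagPart '' (m '' (closure (Torbit c) \ {0})) =
      weightCenterMass c '' (closure (Torbit c) \ {0}) := by
    rw [Set.image_image]
    exact Set.image_congr fun μ hμ =>
      diagPart_eq_weightCenterMass hm hμ.2 (antisym_and_supp_of_mem_closure_torbit hanti hμ.1).2
  rw [hdiag]
  exact subset_antisymm (Set.image_subset_iff.2 fun μ hμ => weightCenterMass_mem_CHmu hanti hμ)
    (CHmu_subset_image_weightCenterMass hanti)

/-- Lemma 3.9 (mtoro): `Diag(m(closure(T·μ) ∖ {0})) = CH_μ`. -/
theorem statement3 {n : ℕ} (c : SC n) (hanti : IsAntisym c) (hc0 : c ≠ 0)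
    (m : SC n → Matrix (Fin n) (Fin n) ℝ) (hm : IsMomentMap m) :
    diagPart '' (m '' (closure (Torbit c) \ {0})) = CHmu c :=
  statement3_general c hanti m hm

end RNPaper
end

section
/- Let μ ∈ V ∖ {0} be a nilpotent Lie bracket. Then the image under the diagonal-part map of the moment map on the T-orbit of μ equals the relative interior of the convex hull of the weights of μ: Diag(m(T·μ)) = CH°_μ, where CH°_μ := {Σ a_{ijk} F_{ij}^k : the sum is over (i,j,k) with c(μ)_{ij}^k ≠ 0, all a_{ijk} > 0, Σ a_{ijk} = 1}. -/
open scoped BigOperators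

namespace RNPaper

variable {n : ℕ}

open scoped Classical in
/-- The index set `I_μ = {(i,j,k) : i < j, c(μ)_{ij}^k ≠ 0}`. -/
noncomputable def idxFinset {n : ℕ} (c : SC n) : Finset (Fin n × Fin n × Fin n) :=
  Finset.univ.filter fun t => t.1 < t.2.1 ∧ c t.1 t.2.1 t.2.2 ≠ 0

/-- `CH°_μ`: the relative interior of the convex hull of the weights of `μ`,
i.e. strictly positive convex combinations of the weights `F_{ij}^k`, `c(μ)_{ij}^k ≠ 0`. -/
noncomputable def CHopen {n : ℕ} (c : SC n) : Set (Matrix (Fin n) (Fin n) ℝ) :=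
  {M | ∃ a : Fin n × Fin n × Fin n → ℝ,
    (∀ t ∈ idxFinset c, 0 < a t) ∧ (∑ t ∈ idxFinset c, a t) = 1 ∧
      M = ∑ t ∈ idxFinset c, a t • Fwt t.1 t.2.1 t.2.2}

/-!
Write `F_t` for the weights and `μ_t` for the structure constants. For `d = exp (s / 2)` with
`s ∈ ℝⁿ`, the constants of `d · μ` satisfy `(d · μ)_t ^ 2 = μ_t ^ 2 * exp ⟪F_t, s⟫`, and testing the
moment map against the matrix units `E_kk` shows that `Diag (m (d · μ))` is the convex combination
of the `F_t` with weights proportional to these squares; hence it lies in `CH°_μ`.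

Conversely, if `m₀ = ∑ a_t F_t` with all `a_t > 0`, then `0` is a strictly positive combination of
the vectors `F_t - m₀`, so `s ↦ ∑ μ_t ^ 2 * exp ⟪F_t - m₀, s⟫` grows exponentially on their span.
At a minimiser on that span the gradient `∑ μ_t ^ 2 exp ⟪F_t - m₀, s⟫ (F_t - m₀)` lies in the span
and is orthogonal to it, hence vanishes, which says exactly that `Diag (m (d · μ)) = m₀`.
-/

open Filter Topology Matrix

section LogSumExp

variable {κ ι : Type*} [Fintype κ] {I : Finset ι} {w : ι → κ → ℝ} {q a : ι → ℝ}

lemma exists_pos_dotProduct_of_mem_span (ha : ∀ t ∈ I, 0 < a t) (haw : ∑ t ∈ I, a t • w t = 0)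
    {u : κ → ℝ} (hu : u ∈ Submodule.span ℝ (w '' I)) (hu0 : u ≠ 0) :
    ∃ t ∈ I, 0 < w t ⬝ᵥ u := by
  by_contra! hneg
  have hsum : ∑ t ∈ I, a t * (w t ⬝ᵥ u) = 0 := by
    simpa [sum_dotProduct] using congrArg (· ⬝ᵥ u) haw
  have horth : ∀ t ∈ I, w t ⬝ᵥ u = 0 := fun t ht =>
    (mul_eq_zero.1 ((Finset.sum_eq_zero_iff_of_nonpos fun s hs =>
      mul_nonpos_of_nonneg_of_nonpos (ha s hs).le (hneg s hs)).1 hsum t ht)).resolve_left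
      (ha t ht).ne'
  have hker : Submodule.span ℝ (w '' I) ≤ LinearMap.ker ((dotProductBilin ℝ ℝ).flip u) :=
    Submodule.span_le.2 <| by rintro _ ⟨t, ht, rfl⟩; exact horth t ht
  exact hu0 (dotProduct_self_eq_zero.1 (hker hu))

lemma exists_pos_mul_norm_le_dotProduct (hI : I.Nonempty) (ha : ∀ t ∈ I, 0 < a t)
    (haw : ∑ t ∈ I, a t • w t = 0) :
    ∃ ε > 0, ∀ u ∈ Submodule.span ℝ (w '' I), ∃ t ∈ I, ε * ‖u‖ ≤ w t ⬝ᵥ u := by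
  set W := Submodule.span ℝ (w '' I)
  let ψ : (κ → ℝ) → ℝ := fun u => I.sup' hI fun t => w t ⬝ᵥ u
  have hψ : Continuous ψ := Continuous.finset_sup'_apply hI fun t _ => by fun_prop
  have hS : IsCompact (Metric.sphere (0 : κ → ℝ) 1 ∩ W) :=
    (isCompact_sphere 0 1).inter_right (Submodule.closed_of_finiteDimensional W)
  obtain ⟨ε, hε, hεψ⟩ := hS.exists_forall_le' hψ.continuousOn (a := 0) fun u hu => by
    obtain ⟨t, ht, hpos⟩ := exists_pos_dotProduct_of_mem_span ha haw hu.2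
      (ne_zero_of_mem_unit_sphere ⟨u, hu.1⟩)
    exact hpos.trans_le (Finset.le_sup' (fun t => w t ⬝ᵥ u) ht)
  refine ⟨ε, hε, fun u hu => ?_⟩
  rcases eq_or_ne u 0 with rfl | hu0
  · obtain ⟨t, ht⟩ := hI
    exact ⟨t, ht, by simp⟩
  have hnu : 0 < ‖u‖ := norm_pos_iff.2 hu0
  obtain ⟨t, ht, hψt⟩ := I.exists_mem_eq_sup' hI fun t => w t ⬝ᵥ (‖u‖⁻¹ • u)
  refine ⟨t, ht, ?_⟩
  have hεt : ε ≤ w t ⬝ᵥ (‖u‖⁻¹ • u) := by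
    rw [← hψt]
    refine hεψ _ ⟨?_, W.smul_mem _ hu⟩
    simp [norm_smul, hnu.ne']
  rw [dotProduct_smul, smul_eq_mul, le_inv_mul_iff₀ hnu] at hεt
  linarith


lemma exists_isMinOn_sum_mul_exp (hI : I.Nonempty) (hq : ∀ t ∈ I, 0 < q t)
    (ha : ∀ t ∈ I, 0 < a t) (haw : ∑ t ∈ I, a t • w t = 0) :
    ∃ u ∈ Submodule.span ℝ (w '' I),
      IsMinOn (fun s => ∑ t ∈ I, q t * Real.exp (w t ⬝ᵥ s)) (Submodule.span ℝ (w '' I)) u := by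
  set W := Submodule.span ℝ (w '' I)
  set g : (κ → ℝ) → ℝ := fun s => ∑ t ∈ I, q t * Real.exp (w t ⬝ᵥ s)
  obtain ⟨ε, hε, hεw⟩ := exists_pos_mul_norm_le_dotProduct hI ha haw
  obtain ⟨t₀, ht₀, hqt₀⟩ := I.exists_min_image q hI
  have hlower : ∀ u ∈ W, q t₀ * Real.exp (ε * ‖u‖) ≤ g u := fun u hu => by
    obtain ⟨t, ht, hεt⟩ := hεw u hu
    calc q t₀ * Real.exp (ε * ‖u‖) ≤ q t * Real.exp (w t ⬝ᵥ u) :=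
          mul_le_mul (hqt₀ t ht) (Real.exp_le_exp.2 hεt) (Real.exp_pos _).le (hq t ht).le
      _ ≤ g u := Finset.single_le_sum (f := fun t => q t * Real.exp (w t ⬝ᵥ u))
          (fun t ht => (mul_pos (hq t ht) (Real.exp_pos _)).le) ht
  have hcoercive : Tendsto g (cocompact _ ⊓ 𝓟 W) atTop := by
    refine tendsto_atTop_mono' _ (eventually_inf_principal.2 (.of_forall hlower)) ?_
    refine (Tendsto.const_mul_atTop (hq t₀ ht₀) ?_).mono_left inf_le_left
    exact Real.tendsto_exp_atTop.comp (tendsto_norm_cocompact_atTop.const_mul_atTop hε)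
  exact (Continuous.continuousOn (by fun_prop)).exists_isMinOn'
    (Submodule.closed_of_finiteDimensional W) W.zero_mem (hcoercive.eventually_ge_atTop (g 0))

lemma sum_mul_exp_smul_eq_zero_of_isMinOn {u : κ → ℝ} (hu : u ∈ Submodule.span ℝ (w '' I))
    (hmin : IsMinOn (fun s => ∑ t ∈ I, q t * Real.exp (w t ⬝ᵥ s))
      (Submodule.span ℝ (w '' I)) u) :
    ∑ t ∈ I, (q t * Real.exp (w t ⬝ᵥ u)) • w t = 0 := by
  set W := Submodule.span ℝ (w '' I)
  set v := ∑ t ∈ I, (q t * Real.exp (w t ⬝ᵥ u)) • w t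
  have hv : v ∈ W := W.sum_mem fun t ht => W.smul_mem _ (Submodule.subset_span ⟨t, ht, rfl⟩)
  set h : ℝ → ℝ := fun r => ∑ t ∈ I, q t * Real.exp (w t ⬝ᵥ u + r * (w t ⬝ᵥ v))
  have hloc : IsLocalMin h 0 := .of_forall fun r => by
    have := hmin (W.add_mem hu (W.smul_mem r hv))
    simpa [h, dotProduct_add, dotProduct_smul] using this
  have hderiv : HasDerivAt h (∑ t ∈ I, q t * Real.exp (w t ⬝ᵥ u) * (w t ⬝ᵥ v)) 0 := by
    have := HasDerivAt.fun_sum (u := I) fun t _ =>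
      ((((hasDerivAt_id (0 : ℝ)).mul_const (w t ⬝ᵥ v)).const_add (w t ⬝ᵥ u)).exp).const_mul (q t)
    simpa [mul_assoc] using this
  have hvv : v ⬝ᵥ v = 0 := by
    simpa [v, sum_dotProduct, mul_assoc] using hloc.hasDerivAt_eq_zero hderiv
  exact dotProduct_self_eq_zero.1 hvv


lemma exists_sum_mul_exp_smul_eq_smul (hq : ∀ t ∈ I, 0 < q t) (ha : ∀ t ∈ I, 0 < a t)
    (hsum : ∑ t ∈ I, a t = 1) :
    ∃ s : κ → ℝ, ∑ t ∈ I, (q t * Real.exp (w t ⬝ᵥ s)) • w t =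
      (∑ t ∈ I, q t * Real.exp (w t ⬝ᵥ s)) • ∑ t ∈ I, a t • w t := by
  have hI : I.Nonempty := Finset.nonempty_of_sum_ne_zero (by rw [hsum]; exact one_ne_zero)
  set m₀ := ∑ t ∈ I, a t • w t
  have hcentered : ∑ t ∈ I, a t • (w t - m₀) = 0 := by
    simp [smul_sub, Finset.sum_sub_distrib, ← Finset.sum_smul, hsum, m₀]
  obtain ⟨s, hs, hmin⟩ := exists_isMinOn_sum_mul_exp (w := fun t => w t - m₀) hI hq ha hcentered
  have hcrit : ∑ t ∈ I, (q t * Real.exp (w t ⬝ᵥ s)) • (w t - m₀) = 0 := by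
    rw [← smul_zero (Real.exp (m₀ ⬝ᵥ s)), ← sum_mul_exp_smul_eq_zero_of_isMinOn hs hmin,
      Finset.smul_sum]
    refine Finset.sum_congr rfl fun t _ => ?_
    rw [smul_smul, sub_dotProduct, Real.exp_sub]
    field_simp
  refine ⟨s, ?_⟩
  simpa [smul_sub, Finset.sum_sub_distrib, ← Finset.sum_smul, sub_eq_zero] using hcrit

end LogSumExp

section Weights

def weightVec (t : Fin n × Fin n × Fin n) : Fin n → ℝ :=
  Pi.single t.2.2 1 - Pi.single t.1 1 - Pi.single t.2.1 1

lemma Fwt_eq_diagonal (i j k : Fin n) : Fwt i j k = diagonal (weightVec (i, j, k)) := by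
  simp only [Fwt, weightVec, ← diagonal_single, diagonal_sub]
  rfl

lemma sum_smul_Fwt (I : Finset (Fin n × Fin n × Fin n)) (x : Fin n × Fin n × Fin n → ℝ) :
    ∑ t ∈ I, x t • Fwt t.1 t.2.1 t.2.2 = diagonal (∑ t ∈ I, x t • weightVec t) := by
  simp only [Fwt_eq_diagonal, ← diagonal_smul]
  exact (map_sum (diagonalAddMonoidHom (Fin n) ℝ) _ I).symm

lemma weightVec_dotProduct (t : Fin n × Fin n × Fin n) (s : Fin n → ℝ) :
    weightVec t ⬝ᵥ s = s t.2.2 - s t.1 - s t.2.1 := by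
  simp [weightVec, sub_dotProduct]

lemma lieAct_single_diag (k : Fin n) (c : SC n) :
    lieAct (single k k 1) c = fun i j l => weightVec (i, j, l) k * c i j l := by
  ext i j l
  simp only [lieAct, single_apply, ite_and, ite_mul, one_mul, zero_mul, Finset.sum_ite_irrel,
    Finset.sum_ite_eq, Finset.mem_univ, ↓reduceIte, Finset.sum_const_zero, weightVec, Pi.sub_apply,
    Pi.single_apply]
  split_ifs <;> subst_vars <;> ring

lemma innerM_single_diag (A : Matrix (Fin n) (Fin n) ℝ) (k : Fin n) :
    innerM A (single k k 1) = A k k := by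
  simp [innerM, single_apply, ite_and]

end Weights

section IndexSet

variable {c : SC n}

lemma mem_idxFinset {t : Fin n × Fin n × Fin n} :
    t ∈ idxFinset c ↔ t.1 < t.2.1 ∧ c t.1 t.2.1 t.2.2 ≠ 0 := by
  simp [idxFinset]

lemma innerV_eq_sum_idxFinset (e : SC n) :
    innerV e c = ∑ t ∈ idxFinset c, e t.1 t.2.1 t.2.2 * c t.1 t.2.1 t.2.2 := by
  rw [idxFinset, Finset.sum_filter]
  simp only [innerV, Fintype.sum_prod_type]
  refine Finset.sum_congr rfl fun i _ => Finset.sum_congr rfl fun j _ =>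
    Finset.sum_congr rfl fun k _ => ?_
  split_ifs <;> simp_all

lemma innerV_self_eq_sum_sq : innerV c c = ∑ t ∈ idxFinset c, c t.1 t.2.1 t.2.2 ^ 2 := by
  simp only [innerV_eq_sum_idxFinset, sq]

lemma sq_pos_of_mem_idxFinset {t : Fin n × Fin n × Fin n} (ht : t ∈ idxFinset c) :
    0 < c t.1 t.2.1 t.2.2 ^ 2 :=
  pow_two_pos_of_ne_zero (mem_idxFinset.1 ht).2

lemma innerV_self_pos (hI : (idxFinset c).Nonempty) : 0 < innerV c c := by
  rw [innerV_self_eq_sum_sq]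
  exact Finset.sum_pos (fun t ht => sq_pos_of_mem_idxFinset ht) hI

lemma ne_zero_of_idxFinset_nonempty (hI : (idxFinset c).Nonempty) : c ≠ 0 := by
  rintro rfl
  obtain ⟨t, ht⟩ := hI
  simp [mem_idxFinset] at ht

lemma idxFinset_nonempty (hanti : IsAntisym c) (hc : c ≠ 0) : (idxFinset c).Nonempty := by
  obtain ⟨i, j, k, hijk⟩ : ∃ i j k, c i j k ≠ 0 := by
    by_contra! h
    exact hc (funext fun i => funext fun j => funext (h i j))
  rcases lt_trichotomy i j with hij | rfl | hij
  · exact ⟨(i, j, k), mem_idxFinset.2 ⟨hij, hijk⟩⟩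
  · exact absurd (by linarith [hanti i i k]) hijk
  · exact ⟨(j, i, k), mem_idxFinset.2 ⟨hij, by rwa [hanti, neg_ne_zero]⟩⟩

lemma idxFinset_diagAct {d : Fin n → ℝ} (hd : ∀ i, 0 < d i) :
    idxFinset (diagAct d c) = idxFinset c := by
  ext t
  simp [mem_idxFinset, diagAct, (hd _).ne']

lemma CHopen_diagAct {d : Fin n → ℝ} (hd : ∀ i, 0 < d i) : CHopen (diagAct d c) = CHopen c := by
  simp only [CHopen, idxFinset_diagAct hd]

lemma diagAct_exp_sq (s : Fin n → ℝ) (i j k : Fin n) :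
    diagAct (fun i => Real.exp (s i / 2)) c i j k ^ 2 =
      c i j k ^ 2 * Real.exp (weightVec (i, j, k) ⬝ᵥ s) := by
  have hsq : ∀ x : ℝ, Real.exp (x / 2) ^ 2 = Real.exp x := fun x => by
    rw [← Real.exp_nat_mul]; ring_nf
  simp only [diagAct, weightVec_dotProduct, Real.exp_sub, mul_pow, div_pow, hsq]
  ring

end IndexSet

section MomentMap

variable {c : SC n} {m : SC n → Matrix (Fin n) (Fin n) ℝ}

lemma diagPart_moment (hm : IsMomentMap m) (hc : c ≠ 0) :
    diagPart (m c) =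
      diagonal ((innerV c c)⁻¹ • ∑ t ∈ idxFinset c, c t.1 t.2.1 t.2.2 ^ 2 • weightVec t) := by
  have hsymm (k : Fin n) : (single k k (1 : ℝ)).IsSymm := by
    simpa only [diagonal_single] using isSymm_diagonal (Pi.single k (1 : ℝ))
  refine congrArg diagonal (funext fun k => ?_)
  rw [← innerM_single_diag (m c) k, (hm c hc).2 _ (hsymm k),
    innerV_eq_sum_idxFinset (lieAct _ c), lieAct_single_diag]
  simp only [Pi.smul_apply, Finset.sum_apply, smul_eq_mul]
  exact congrArg _ (Finset.sum_congr rfl fun t _ => by ring)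

lemma diagPart_moment_mem_CHopen (hm : IsMomentMap m) (hI : (idxFinset c).Nonempty) :
    diagPart (m c) ∈ CHopen c := by
  have hZ := innerV_self_pos hI
  refine ⟨fun t => c t.1 t.2.1 t.2.2 ^ 2 / innerV c c,
    fun t ht => div_pos (sq_pos_of_mem_idxFinset ht) hZ, ?_, ?_⟩
  · rw [← Finset.sum_div, ← innerV_self_eq_sum_sq, div_self hZ.ne']
  · rw [diagPart_moment hm (ne_zero_of_idxFinset_nonempty hI), sum_smul_Fwt, Finset.smul_sum]
    simp only [smul_smul, div_eq_inv_mul]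

lemma exists_diagPart_moment_diagAct_eq (hm : IsMomentMap m) {a : Fin n × Fin n × Fin n → ℝ}
    (ha : ∀ t ∈ idxFinset c, 0 < a t) (hsum : ∑ t ∈ idxFinset c, a t = 1) :
    ∃ d : Fin n → ℝ, (∀ i, 0 < d i) ∧
      diagPart (m (diagAct d c)) = ∑ t ∈ idxFinset c, a t • Fwt t.1 t.2.1 t.2.2 := by
  obtain ⟨s, hs⟩ := exists_sum_mul_exp_smul_eq_smul (w := weightVec)
    (fun t ht => sq_pos_of_mem_idxFinset ht) ha hsum
  have hd (i : Fin n) : 0 < Real.exp (s i / 2) := Real.exp_pos _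
  have hI : (idxFinset (diagAct (fun i => Real.exp (s i / 2)) c)).Nonempty := by
    rw [idxFinset_diagAct hd]
    exact Finset.nonempty_of_sum_ne_zero (by rw [hsum]; exact one_ne_zero)
  have hZ := innerV_self_pos hI
  refine ⟨_, hd, ?_⟩
  simp only [innerV_self_eq_sum_sq, idxFinset_diagAct hd, diagAct_exp_sq] at hZ
  rw [diagPart_moment hm (ne_zero_of_idxFinset_nonempty hI), sum_smul_Fwt]
  simp only [innerV_self_eq_sum_sq, idxFinset_diagAct hd, diagAct_exp_sq]
  rw [hs, inv_smul_smul₀ hZ.ne']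

end MomentMap

/-- Corollary 3.12: `Diag(m(T·μ)) = CH°_μ`. -/
theorem statement5 {n : ℕ} (c : SC n) (hLie : IsNilpotentLie c) (hc0 : c ≠ 0)
    (m : SC n → Matrix (Fin n) (Fin n) ℝ) (hm : IsMomentMap m) :
    diagPart '' (m '' Torbit c) = CHopen c := by
  have hI : (idxFinset c).Nonempty := idxFinset_nonempty hLie.1 hc0
  ext M
  constructor
  · rintro ⟨_, ⟨_, ⟨d, hd, rfl⟩, rfl⟩, rfl⟩
    rw [← CHopen_diagAct hd]
    exact diagPart_moment_mem_CHopen hm (by rwa [idxFinset_diagAct hd])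
  · rintro ⟨a, ha, hsum, rfl⟩
    obtain ⟨d, hd, hdiag⟩ := exists_diagPart_moment_diagAct_eq hm ha hsum
    exact ⟨_, ⟨_, ⟨d, hd, rfl⟩, rfl⟩, hdiag⟩

end RNPaper
end

section
/- If 𝔫 is a nilpotent Lie algebra over ℝ endowed with a nice basis, then for every derivation D of 𝔫, the linear map Diag(D) given by the diagonal part of the matrix of D in that basis is again a derivation of 𝔫. -/
open scoped BigOperators

namespace RNPaper

variable {n : ℕ}

/- A derivation `D` satisfies `D_kk = D_ii + D_jj` whenever `[e_i, e_j]` has a nonzero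
`e_k`-component: comparing `e_k`-components of `D[e_i,e_j] = [De_i,e_j] + [e_i,De_j]`, niceness
kills every off-diagonal entry of `D` that could contribute. Conversely, any diagonal map with
this additivity on the support of the bracket is a derivation, so `Diag(D)` is one. -/

theorem eq_of_pair_eq_pair_right {α : Type*} [DecidableEq α] {a b c : α}
    (h : ({a, b} : Finset α) = {c, b}) : a = c := by
  have hc : c ∈ ({a, b} : Finset α) := h ▸ Finset.mem_insert_self c {b}
  have ha : a ∈ ({c, b} : Finset α) := h ▸ Finset.mem_insert_self a {b}
  simp only [Finset.mem_insert, Finset.mem_singleton] at hc ha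
  rcases hc with rfl | rfl <;> rcases ha with ha | ha <;> simp_all

namespace IsNice

variable {c : SC n} {i j k p q : Fin n}

theorem left_eq (hc : IsNice c) (h : c i j k ≠ 0) (h' : c p j k ≠ 0) : p = i := by
  rcases hc.2 i j p j k h h' with heq | hdisj
  · exact (eq_of_pair_eq_pair_right heq).symm
  · exact absurd hdisj (Finset.not_disjoint_iff.2 ⟨j, by simp, by simp⟩)

theorem right_eq (hc : IsNice c) (h : c i j k ≠ 0) (h' : c i q k ≠ 0) : q = j := by
  rcases hc.2 i j i q k h h' with heq | hdisj
  · rw [Finset.pair_comm i j, Finset.pair_comm i q] at heq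
    exact eq_of_pair_eq_pair_right heq.symm
  · exact absurd hdisj (Finset.not_disjoint_iff.2 ⟨i, by simp, by simp⟩)

end IsNice

theorem br_single_left (c : SC n) (i : Fin n) (y : Fin n → ℝ) (k : Fin n) :
    br c (Pi.single i 1) y k = ∑ q, y q * c i q k := by
  simp [br, Pi.single_apply, ite_mul]

theorem br_single_right (c : SC n) (x : Fin n → ℝ) (j k : Fin n) :
    br c x (Pi.single j 1) k = ∑ p, x p * c p j k := by
  simp [br, Pi.single_apply, ite_mul, mul_ite]

theorem br_single_single (c : SC n) (i j : Fin n) :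
    br c (Pi.single i 1) (Pi.single j 1) = fun k => c i j k := by
  funext k
  simp [br_single_left, Pi.single_apply]

theorem IsNice.diag_eq_add_of_ne_zero {c : SC n} (hc : IsNice c) {D : Matrix (Fin n) (Fin n) ℝ}
    (hD : IsDeriv c D) {i j k : Fin n} (h : c i j k ≠ 0) : D k k = D i i + D j j := by
  have hk := congrFun (hD (Pi.single i 1) (Pi.single j 1)) k
  have hL : D.mulVec (br c (Pi.single i 1) (Pi.single j 1)) k = D k k * c i j k := by
    rw [br_single_single]
    simp only [Matrix.mulVec, dotProduct]
    refine Fintype.sum_eq_single k fun l hl => ?_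
    by_cases hl' : c i j l = 0
    · simp [hl']
    · exact absurd (hc.1 i j l k hl' h) hl
  have hR₁ : br c (D.mulVec (Pi.single i 1)) (Pi.single j 1) k = D i i * c i j k := by
    rw [br_single_right, Matrix.mulVec_single_one]
    refine Fintype.sum_eq_single i fun p hp => ?_
    by_cases hp' : c p j k = 0
    · simp [hp']
    · exact absurd (hc.left_eq h hp') hp
  have hR₂ : br c (Pi.single i 1) (D.mulVec (Pi.single j 1)) k = D j j * c i j k := by
    rw [br_single_left, Matrix.mulVec_single_one]
    refine Fintype.sum_eq_single j fun q hq => ?_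
    by_cases hq' : c i q k = 0
    · simp [hq']
    · exact absurd (hc.right_eq h hq') hq
  rw [hL, Pi.add_apply, hR₁, hR₂, ← add_mul] at hk
  exact mul_right_cancel₀ h hk

theorem isDeriv_diagonal {c : SC n} {d : Fin n → ℝ}
    (hd : ∀ i j k, c i j k ≠ 0 → d k = d i + d j) : IsDeriv c (Matrix.diagonal d) := by
  intro x y
  funext k
  simp only [Matrix.mulVec_diagonal, br, Pi.add_apply, Finset.mul_sum, ← Finset.sum_add_distrib]
  refine Finset.sum_congr rfl fun i _ => Finset.sum_congr rfl fun j _ => ?_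
  by_cases h : c i j k = 0
  · simp [h]
  · rw [hd i j k h]; ring

theorem statement7_general {n : ℕ} (c : SC n) (hnice : IsNice c)
    (D : Matrix (Fin n) (Fin n) ℝ) (hD : IsDeriv c D) :
    IsDeriv c (diagPart D) :=
  isDeriv_diagonal fun _ _ _ h => hnice.diag_eq_add_of_ne_zero hD h

/-- Corollary 3.16 (niceD): for a nilpotent Lie algebra with a nice basis, the
diagonal part of any derivation is again a derivation. -/
theorem statement7 {n : ℕ} (c : SC n) (hLie : IsNilpotentLie c) (hnice : IsNice c)
    (D : Matrix (Fin n) (Fin n) ℝ) (hD : IsDeriv c D) :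
    IsDeriv c (diagPart D) :=
  statement7_general c hnice D hD

end RNPaper
end

section
/- Let 𝔫 be the 3-dimensional Heisenberg Lie algebra with basis {e₁,e₂,e₃} and Lie bracket [e₁,e₂] = e₃. Then: (a) the derivations of 𝔫 which are diagonal in this basis are exactly the maps Diag(d₁,d₂,d₁+d₂), d₁,d₂ ∈ ℝ; (b) a diagonal derivation D = Diag(d₁,d₂,d₁+d₂) with tr D > 0 is Ricci negative if and only if 2d₁+d₂ > 0 and d₁+2d₂ > 0. -/
open scoped BigOperators

namespace RNPaper

variable {n : ℕ}

/-- The 3-dimensional Heisenberg Lie algebra: `[e₁,e₂] = e₃`. -/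
def heis3 : SC 3 := brk 0 1 2 1


/-!
The sums over an orthonormal basis in the Ricci form are contractions with `P⁻¹`, so the Ricci
form does not depend on the basis. If `D = Diag(a, b, a + b)` has distinct eigenvalues
`0, a, b, a + b`, a metric for which `D` is symmetric is diagonal, `P = diag q`, and the Ricci form
is then diagonal in the basis `f, e₁, e₂, e₃`. Eliminating `q₀q₃ / (q₁q₂)` between
`Ric(e₁, e₁) < 0` and `Ric(e₃, e₃) < 0` leaves `(a + b)(2a + b) > 0`, and symmetrically
`(a + b)(a + 2b) > 0`. Conversely `q = (1, 1, 1, s)` with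
`max(0, -4(a + b)a, -4(a + b)b) < s < 4(a + b)²` makes every diagonal entry negative. If two
eigenvalues coincide (`a = 0`, `b = 0` or `a = b`), the inequalities already follow from `tr D > 0`.
-/

open Matrix

section TraceIdentities

variable {n R : Type*} [Fintype n] [CommSemiring R]

lemma sum_dotProduct_mulVec (U M : Matrix n n R) :
    ∑ a, U a ⬝ᵥ M *ᵥ U a = trace (M * (Uᵀ * U)) := by
  rw [← Matrix.mul_assoc, trace_mul_cycle, trace]
  simp only [diag, mul_mul_apply, transpose_transpose]

lemma sum_sum_mul_eq_trace (A B : Matrix n n R) :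
    ∑ a, ∑ b, A a b * B a b = trace (A * Bᵀ) := by
  simp [trace, mul_apply]

lemma sum_sum_dotProduct_mulVec_mul (U M M' : Matrix n n R) :
    ∑ a, ∑ b, (U a ⬝ᵥ M *ᵥ U b) * (U a ⬝ᵥ M' *ᵥ U b)
      = trace (M * (Uᵀ * U) * M'ᵀ * (Uᵀ * U)) := by
  have h := sum_sum_mul_eq_trace (U * M * Uᵀ) (U * M' * Uᵀ)
  simp only [mul_mul_apply, transpose_transpose] at h
  rw [h, transpose_mul, transpose_mul, transpose_transpose]
  simp only [Matrix.mul_assoc]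
  rw [trace_mul_comm U]
  simp only [Matrix.mul_assoc]

end TraceIdentities

section RicciForm

variable {N : ℕ}

lemma br_eq_adM_mulVec (γ : SC N) (x y : Fin N → ℝ) : br γ x y = adM γ x *ᵥ y := by
  ext k
  simp only [br, adM, mulVec, dotProduct, of_apply, Finset.sum_mul]
  rw [Finset.sum_comm]
  exact Finset.sum_congr rfl fun _ _ => Finset.sum_congr rfl fun _ _ => by ring

lemma adM_apply (γ : SC N) (X : Fin N → ℝ) (k j : Fin N) :
    adM γ X k j = br γ X (Pi.single j 1) k := by
  rw [br_eq_adM_mulVec, mulVec_single_one, col_apply]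

lemma bip_br_br (γ : SC N) (P : Matrix (Fin N) (Fin N) ℝ) (X Y x y : Fin N → ℝ) :
    bip P (br γ X x) (br γ Y y) = x ⬝ᵥ ((adM γ X)ᵀ * P * adM γ Y) *ᵥ y := by
  rw [bip, br_eq_adM_mulVec, br_eq_adM_mulVec, Matrix.mul_assoc, ← mulVec_mulVec,
    ← mulVec_mulVec, dotProduct_mulVec x, vecMul_transpose]

def bracketPairing (γ : SC N) (P : Matrix (Fin N) (Fin N) ℝ) (Z : Fin N → ℝ) :
    Matrix (Fin N) (Fin N) ℝ :=
  of fun i j => ∑ k, γ i j k * (P *ᵥ Z) k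

lemma bip_br_left (γ : SC N) (P : Matrix (Fin N) (Fin N) ℝ) (x y Z : Fin N → ℝ) :
    bip P (br γ x y) Z = x ⬝ᵥ bracketPairing γ P Z *ᵥ y := by
  simp only [bip, bracketPairing]
  generalize P *ᵥ Z = w
  simp only [br, dotProduct, mulVec, of_apply, Finset.sum_mul, Finset.mul_sum]
  rw [Finset.sum_comm]
  refine Finset.sum_congr rfl fun _ _ => ?_
  rw [Finset.sum_comm]
  exact Finset.sum_congr rfl fun _ _ => Finset.sum_congr rfl fun _ _ => by ring

lemma bracketPairing_apply (γ : SC N) (P : Matrix (Fin N) (Fin N) ℝ) (Z : Fin N → ℝ)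
    (i j : Fin N) :
    bracketPairing γ P Z i j = bip P (br γ (Pi.single i 1) (Pi.single j 1)) Z := by
  rw [bip_br_left, mulVec_single_one, single_one_dotProduct, col_apply]

lemma inv_eq_transpose_mul_of_orthonormal {P : Matrix (Fin N) (Fin N) ℝ}
    {u : Fin N → Fin N → ℝ} (hu : ∀ a b, bip P (u a) (u b) = if a = b then 1 else 0) :
    P⁻¹ = (of u)ᵀ * of u := by
  have h : of u * (P * (of u)ᵀ) = 1 := by
    ext a b
    rw [← Matrix.mul_assoc, mul_mul_apply, transpose_transpose, one_apply]
    exact hu a b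
  apply inv_eq_right_inv
  rw [← Matrix.mul_assoc]
  exact mul_eq_one_comm.mp h

/-- The Ricci form with the sums over an orthonormal basis replaced by contractions with `P⁻¹`. -/
noncomputable def ricciForm (γ : SC N) (P : Matrix (Fin N) (Fin N) ℝ) (H X Y : Fin N → ℝ) : ℝ :=
  -(1 / 2) * trace ((adM γ X)ᵀ * P * adM γ Y * P⁻¹)
    + (1 / 4) * trace (bracketPairing γ P X * P⁻¹ * (bracketPairing γ P Y)ᵀ * P⁻¹)
    - (1 / 2) * trace (adM γ X * adM γ Y)
    - (1 / 2) * (bip P (br γ H X) Y + bip P (br γ H Y) X)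

end RicciForm

theorem ricForm_eq_ricciForm {N : ℕ} (γ : SC N) {P : Matrix (Fin N) (Fin N) ℝ}
    {u : Fin N → Fin N → ℝ} (hu : ∀ a b, bip P (u a) (u b) = if a = b then 1 else 0)
    (H X Y : Fin N → ℝ) : ricForm γ P u H X Y = ricciForm γ P H X Y := by
  have h₁ : ∑ a, bip P (br γ X (u a)) (br γ Y (u a))
      = trace ((adM γ X)ᵀ * P * adM γ Y * P⁻¹) := by
    simp only [bip_br_br, inv_eq_transpose_mul_of_orthonormal hu]
    exact sum_dotProduct_mulVec (of u) _
  have h₂ : ∑ a, ∑ b, bip P (br γ (u a) (u b)) X * bip P (br γ (u a) (u b)) Y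
      = trace (bracketPairing γ P X * P⁻¹ * (bracketPairing γ P Y)ᵀ * P⁻¹) := by
    simp only [bip_br_left, inv_eq_transpose_mul_of_orthonormal hu]
    exact sum_sum_dotProduct_mulVec_mul (of u) _ _
  rw [ricForm, ricciForm, h₁, h₂]

section DiagonalMetric

variable {N : ℕ}

lemma bip_diagonal (q x y : Fin N → ℝ) : bip (diagonal q) x y = ∑ i, q i * x i * y i := by
  simp only [bip, dotProduct, mulVec_diagonal]
  exact Finset.sum_congr rfl fun _ _ => by ring

lemma inv_diagonal_eq {ι K : Type*} [Fintype ι] [DecidableEq ι] [Field K] {q : ι → K}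
    (hq : ∀ i, q i ≠ 0) : (diagonal q)⁻¹ = diagonal q⁻¹ := by
  refine inv_eq_right_inv ?_
  rw [diagonal_mul_diagonal, ← diagonal_one]
  exact congrArg diagonal (funext fun i => mul_inv_cancel₀ (hq i))

noncomputable def diagFrame (q : Fin N → ℝ) (a : Fin N) : Fin N → ℝ :=
  Pi.single a (√(q a))⁻¹

lemma bip_diagFrame {q : Fin N → ℝ} (hq : ∀ i, 0 < q i) (a b : Fin N) :
    bip (diagonal q) (diagFrame q a) (diagFrame q b) = if a = b then 1 else 0 := by
  rw [bip_diagonal]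
  split_ifs with hab
  · subst hab
    simp only [diagFrame, Pi.single_apply, mul_ite, mul_zero, ite_mul, zero_mul,
      Finset.sum_ite_eq', Finset.mem_univ, if_true]
    rw [mul_assoc, ← mul_inv, Real.mul_self_sqrt (hq a).le, mul_inv_cancel₀ (hq a).ne']
  · simp only [diagFrame, Pi.single_apply, mul_ite, mul_zero, ite_mul, zero_mul]
    simp [Ne.symm hab]

lemma eq_diagonal_diag_of_commute {ι K : Type*} [Fintype ι] [DecidableEq ι] [Field K]
    {δ : ι → K} (hδ : Function.Injective δ) {P : Matrix ι ι K}
    (h : diagonal δ * P = P * diagonal δ) : P = diagonal P.diag := by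
  ext i j
  by_cases hij : i = j
  · simp [hij]
  · have hPij := congrFun₂ h i j
    rw [diagonal_mul, mul_diagonal] at hPij
    have hne : δ i - δ j ≠ 0 := sub_ne_zero.mpr (hδ.ne hij)
    rw [diagonal_apply_ne _ hij]
    exact (mul_eq_zero.mp (by linear_combination hPij : (δ i - δ j) * P i j = 0)).resolve_left hne

lemma eq_of_forall_bip_eq {P : Matrix (Fin N) (Fin N) ℝ} (hP : P.PosDef)
    {H H' : Fin N → ℝ} (h : ∀ X, bip P H X = bip P H' X) : H = H' := by
  by_contra hne
  have hpos := hP.dotProduct_mulVec_pos (sub_ne_zero.mpr hne)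
  have hzero := h (H - H')
  simp only [bip] at hzero
  simp only [star_trivial, sub_dotProduct, hzero, sub_self, lt_irrefl] at hpos

lemma sum_mul_sq_neg {ι : Type*} [Fintype ι] {ρ X : ι → ℝ} (hρ : ∀ i, ρ i < 0) (hX : X ≠ 0) :
    ∑ i, ρ i * X i ^ 2 < 0 := by
  obtain ⟨i, hi⟩ := Function.ne_iff.mp hX
  exact Finset.sum_neg' (fun j _ => mul_nonpos_of_nonpos_of_nonneg (hρ j).le (sq_nonneg _))
    ⟨i, Finset.mem_univ _, mul_neg_of_neg_of_pos (hρ i) (pow_two_pos_of_ne_zero hi)⟩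

end DiagonalMetric

section Derivations

variable {N : ℕ}

lemma br_single_single_apply (c : SC N) (i j k : Fin N) (s t : ℝ) :
    br c (Pi.single i s) (Pi.single j t) k = s * t * c i j k := by
  simp [br, Pi.single_apply]

theorem isDeriv_diagonal_iff (c : SC N) (d : Fin N → ℝ) :
    IsDeriv c (diagonal d) ↔ ∀ i j k, c i j k ≠ 0 → d k = d i + d j := by
  constructor
  · intro h i j k hc
    have hk := congrFun (h (Pi.single i 1) (Pi.single j 1)) k
    rw [mulVec_diagonal, Pi.add_apply, diagonal_mulVec_single, diagonal_mulVec_single,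
      br_single_single_apply, br_single_single_apply, br_single_single_apply] at hk
    refine mul_right_cancel₀ hc ?_
    linear_combination hk
  · intro h x y
    ext k
    simp only [mulVec_diagonal, Pi.add_apply, br, Finset.mul_sum, ← Finset.sum_add_distrib]
    refine Finset.sum_congr rfl fun i _ => Finset.sum_congr rfl fun j _ => ?_
    by_cases hc : c i j k = 0
    · simp [hc]
    · rw [h i j k hc]
      ring

lemma Dext_diagonal (d : Fin N → ℝ) : Dext (diagonal d) = diagonal (Fin.cons 0 d) := by
  ext i j
  refine Fin.cases ?_ (fun i => ?_) i <;> refine Fin.cases ?_ (fun j => ?_) j <;>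
    simp [Dext, diagonal_apply]

lemma br_solvSC (D : Matrix (Fin N) (Fin N) ℝ) (c : SC N) (x y : Fin (N + 1) → ℝ) :
    br (solvSC D c) x y
      = Fin.cons 0 (D *ᵥ (x 0 • Fin.tail y - y 0 • Fin.tail x) + br c (Fin.tail x) (Fin.tail y)) := by
  ext k
  refine Fin.cases ?_ (fun k => ?_) k
  · simp [br, solvSC, Dext, cext, Fin.sum_univ_succ]
  · simp [br, solvSC, Dext, cext, Fin.sum_univ_succ, mulVec, dotProduct, Fin.tail,
      Finset.sum_add_distrib]
    have h : ∑ i, D k i * (x 0 * y i.succ - y 0 * x i.succ)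
        = ∑ i, x 0 * y i.succ * D k i - ∑ i, x i.succ * y 0 * D k i := by
      rw [← Finset.sum_sub_distrib]
      exact Finset.sum_congr rfl fun _ _ => by ring
    rw [h]
    ring

end Derivations

lemma br_heis3 (x y : Fin 3 → ℝ) : br heis3 x y = ![0, 0, x 0 * y 1 - x 1 * y 0] := by
  ext k
  fin_cases k <;> simp [br, heis3, brk, Fin.sum_univ_three]
  ring

lemma isDeriv_heis3_diagonal_iff (d : Fin 3 → ℝ) :
    IsDeriv heis3 (diagonal d) ↔ ∃ d1 d2 : ℝ, diagonal d = diagonal ![d1, d2, d1 + d2] := by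
  rw [isDeriv_diagonal_iff]
  constructor
  · intro h
    refine ⟨d 0, d 1, congrArg diagonal ?_⟩
    ext i
    fin_cases i <;> simp [h 0 1 2 (by simp [heis3, brk])]
  · rintro ⟨d1, d2, hd⟩ i j k hc
    rw [diagonal_injective hd]
    fin_cases i <;> fin_cases j <;> fin_cases k <;> simp [heis3, brk] at hc ⊢
    ring

/-- `𝔰_D` for the derivation `D = Diag(a, b, a + b)` of `heis3`. -/
def heisExt (a b : ℝ) : SC 4 := solvSC (diagonal ![a, b, a + b]) heis3

lemma br_heisExt (a b : ℝ) (x y : Fin 4 → ℝ) :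
    br (heisExt a b) x y =
      ![0, a * (x 0 * y 1 - x 1 * y 0), b * (x 0 * y 2 - x 2 * y 0),
        (a + b) * (x 0 * y 3 - x 3 * y 0) + (x 1 * y 2 - x 2 * y 1)] := by
  rw [heisExt, br_solvSC, br_heis3]
  ext k
  fin_cases k <;> simp [Fin.tail, vecHead, vecTail, mulVec_diagonal, -mul_eq_mul_left_iff] <;> ring

lemma adM_heisExt (a b : ℝ) (X : Fin 4 → ℝ) :
    adM (heisExt a b) X = !![0, 0, 0, 0;
      -a * X 1, a * X 0, 0, 0;
      -b * X 2, 0, b * X 0, 0;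
      -(a + b) * X 3, -X 2, X 1, (a + b) * X 0] := by
  ext k j
  rw [adM_apply, br_heisExt]
  fin_cases k <;> fin_cases j <;> simp
  ring

lemma bracketPairing_heisExt (a b : ℝ) (q X : Fin 4 → ℝ) :
    bracketPairing (heisExt a b) (diagonal q) X =
      !![0, a * q 1 * X 1, b * q 2 * X 2, (a + b) * q 3 * X 3;
        -(a * q 1 * X 1), 0, q 3 * X 3, 0;
        -(b * q 2 * X 2), -(q 3 * X 3), 0, 0;
        -((a + b) * q 3 * X 3), 0, 0, 0] := by
  ext i j
  rw [bracketPairing_apply, br_heisExt, bip_diagonal]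
  fin_cases i <;> fin_cases j <;>
    simp [Fin.sum_univ_four, -mul_eq_mul_right_iff, -mul_eq_mul_left_iff] <;> ring

lemma bip_meanCurvature_heisExt (a b : ℝ) {q : Fin 4 → ℝ} (hq : q 0 ≠ 0) (X : Fin 4 → ℝ) :
    bip (diagonal q) ![2 * (a + b) / q 0, 0, 0, 0] X = trace (adM (heisExt a b) X) := by
  rw [bip_diagonal, adM_heisExt]
  simp [trace, Fin.sum_univ_four]
  field_simp
  ring

/-- `Ric(eᵢ, eᵢ)` on `heisExt a b` with the metric `diagonal q`, indexed by `f, e₁, e₂, e₃`. -/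
noncomputable def heisRicci (a b : ℝ) (q : Fin 4 → ℝ) : Fin 4 → ℝ :=
  ![-(a ^ 2 + b ^ 2 + (a + b) ^ 2),
    -(q 3 / (2 * q 2)) - 2 * (a + b) * a * q 1 / q 0,
    -(q 3 / (2 * q 1)) - 2 * (a + b) * b * q 2 / q 0,
    q 3 ^ 2 / (2 * q 1 * q 2) - 2 * (a + b) ^ 2 * q 3 / q 0]

lemma ricciForm_heisExt (a b : ℝ) {q : Fin 4 → ℝ} (hq : ∀ i, q i ≠ 0) (X : Fin 4 → ℝ) :
    ricciForm (heisExt a b) (diagonal q) ![2 * (a + b) / q 0, 0, 0, 0] X X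
      = ∑ i, heisRicci a b q i * X i ^ 2 := by
  rw [ricciForm, inv_diagonal_eq hq, adM_heisExt, bracketPairing_heisExt, br_heisExt,
    bip_diagonal]
  have := hq 0; have := hq 1; have := hq 2; have := hq 3
  simp only [trace, diag, mul_apply, transpose_apply, diagonal_apply, Fin.sum_univ_four]
  simp [heisRicci]
  field_simp
  ring
lemma exists_heisRicci_neg {a b : ℝ} (h₁ : 0 < 2 * a + b) (h₂ : 0 < a + 2 * b) :
    ∃ q : Fin 4 → ℝ, (∀ i, 0 < q i) ∧ ∀ i, heisRicci a b q i < 0 := by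
  have hc : 0 < a + b := by linarith
  have hL : max (max 0 (-(4 * (a + b) * a))) (-(4 * (a + b) * b)) < 4 * (a + b) ^ 2 := by
    simp only [max_lt_iff]
    refine ⟨⟨by positivity, ?_⟩, ?_⟩ <;> nlinarith
  obtain ⟨s, hLs, hs⟩ := exists_between hL
  simp only [max_lt_iff] at hLs
  obtain ⟨⟨hs₀, hsa⟩, hsb⟩ := hLs
  refine ⟨![1, 1, 1, s], fun i => ?_, fun i => ?_⟩ <;> fin_cases i <;> simp [heisRicci]
  all_goals nlinarith [sq_nonneg a, sq_nonneg b, mul_pos hc hc]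

lemma pos_of_heisRicci_neg {a b : ℝ} (hab : 0 < a + b) {q : Fin 4 → ℝ} (hq : ∀ i, 0 < q i)
    (hρ : ∀ i, heisRicci a b q i < 0) : 0 < 2 * a + b ∧ 0 < a + 2 * b := by
  have hq₀ := hq 0; have hq₁ := hq 1; have hq₂ := hq 2; have hq₃ := hq 3
  have e₁ : heisRicci a b q 1 * (2 * q 0 * q 2) = -(q 0 * q 3 + 4 * (a + b) * a * q 1 * q 2) := by
    simp [heisRicci]; field_simp; ring
  have e₂ : heisRicci a b q 2 * (2 * q 0 * q 1) = -(q 0 * q 3 + 4 * (a + b) * b * q 1 * q 2) := by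
    simp [heisRicci]; field_simp; ring
  have e₃ : heisRicci a b q 3 * (2 * q 0 * q 1 * q 2 / q 3)
      = q 0 * q 3 - 4 * (a + b) ^ 2 * q 1 * q 2 := by
    simp [heisRicci]; field_simp; ring
  have n₁ := mul_neg_of_neg_of_pos (hρ 1) (by positivity : 0 < 2 * q 0 * q 2)
  have n₂ := mul_neg_of_neg_of_pos (hρ 2) (by positivity : 0 < 2 * q 0 * q 1)
  have n₃ := mul_neg_of_neg_of_pos (hρ 3) (by positivity : 0 < 2 * q 0 * q 1 * q 2 / q 3)
  rw [e₁] at n₁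
  rw [e₂] at n₂
  rw [e₃] at n₃
  have hk : 0 ≤ 4 * q 1 * q 2 * (a + b) := by positivity
  constructor
  · exact pos_of_mul_pos_right (by linarith : 0 < 4 * q 1 * q 2 * (a + b) * (2 * a + b)) hk
  · exact pos_of_mul_pos_right (by linarith : 0 < 4 * q 1 * q 2 * (a + b) * (a + 2 * b)) hk

theorem isRicciNegative_heis3_of_heisRicci_neg {a b : ℝ} {q : Fin 4 → ℝ} (hq : ∀ i, 0 < q i)
    (hρ : ∀ i, heisRicci a b q i < 0) : IsRicciNegative heis3 (diagonal ![a, b, a + b]) := by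
  refine ⟨diagonal q, posDef_diagonal_iff.mpr hq,
    fun j => diagonal_apply_ne _ (Fin.succ_ne_zero j).symm, ?_, diagFrame q, bip_diagFrame hq,
    ![2 * (a + b) / q 0, 0, 0, 0], bip_meanCurvature_heisExt a b (hq 0).ne', fun X hX => ?_⟩
  · rw [Dext_diagonal, diagonal_transpose, diagonal_mul_diagonal, diagonal_mul_diagonal]
    exact congrArg diagonal (funext fun _ => mul_comm _ _)
  · exact ((ricForm_eq_ricciForm _ (bip_diagFrame hq) _ _ _).trans
      (ricciForm_heisExt a b (fun i => (hq i).ne') X)).trans_lt (sum_mul_sq_neg hρ hX)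

theorem exists_heisRicci_neg_of_isRicciNegative {a b : ℝ} (ha : a ≠ 0) (hb : b ≠ 0)
    (hab : a ≠ b) (hab' : a + b ≠ 0) (h : IsRicciNegative heis3 (diagonal ![a, b, a + b])) :
    ∃ q : Fin 4 → ℝ, (∀ i, 0 < q i) ∧ ∀ i, heisRicci a b q i < 0 := by
  have hδ : Function.Injective (Fin.cons 0 ![a, b, a + b] : Fin 4 → ℝ) := by
    intro i j hij
    fin_cases i <;> fin_cases j <;> simp at hij ⊢ <;> grind
  obtain ⟨P, hP, -, hDP, u, hu, H, hH, hneg⟩ := h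
  rw [Dext_diagonal, diagonal_transpose] at hDP
  obtain ⟨q, hq, rfl⟩ : ∃ q : Fin 4 → ℝ, (∀ i, 0 < q i) ∧ P = diagonal q :=
    ⟨P.diag, fun _ => hP.diag_pos, eq_diagonal_diag_of_commute hδ hDP⟩
  obtain rfl : H = ![2 * (a + b) / q 0, 0, 0, 0] := eq_of_forall_bip_eq hP fun X =>
    (hH X).trans (bip_meanCurvature_heisExt a b (hq 0).ne' X).symm
  refine ⟨q, hq, fun k => ?_⟩
  have hk := ((ricForm_eq_ricciForm _ hu _ _ _).trans
    (ricciForm_heisExt a b (fun i => (hq i).ne') _)).symm.trans_lt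
    (hneg (Pi.single k 1) (by simp))
  simpa [Pi.single_apply] using hk

theorem pos_of_isRicciNegative_heis3 {a b : ℝ} (hab : 0 < a + b)
    (h : IsRicciNegative heis3 (diagonal ![a, b, a + b])) : 0 < 2 * a + b ∧ 0 < a + 2 * b := by
  by_cases hdeg : a = 0 ∨ b = 0 ∨ a = b
  · rcases hdeg with rfl | rfl | rfl <;> constructor <;> linarith
  push Not at hdeg
  obtain ⟨q, hq, hρ⟩ :=
    exists_heisRicci_neg_of_isRicciNegative hdeg.1 hdeg.2.1 hdeg.2.2 hab.ne' h
  exact pos_of_heisRicci_neg hab hq hρ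

/-- Example 3.4 (heis3): diagonal derivations of the Heisenberg Lie algebra and the
Ricci negative ones among them. -/
theorem statement10 :
    (∀ D : Matrix (Fin 3) (Fin 3) ℝ, D.IsDiag →
      (IsDeriv heis3 D ↔ ∃ d1 d2 : ℝ, D = Matrix.diagonal ![d1, d2, d1 + d2])) ∧
    (∀ d1 d2 : ℝ,
      0 < (Matrix.diagonal ![d1, d2, d1 + d2] : Matrix (Fin 3) (Fin 3) ℝ).trace →
      (IsRicciNegative heis3 (Matrix.diagonal ![d1, d2, d1 + d2]) ↔
        0 < 2 * d1 + d2 ∧ 0 < d1 + 2 * d2)) := by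
  refine ⟨fun D hD => ?_, fun d1 d2 htr => ?_⟩
  · rw [← hD.diagonal_diag]
    exact isDeriv_heis3_diagonal_iff _
  · have hd : 0 < d1 + d2 := by
      simp [trace_diagonal, Fin.sum_univ_three] at htr
      linarith
    refine ⟨pos_of_isRicciNegative_heis3 hd, fun ⟨h₁, h₂⟩ => ?_⟩
    obtain ⟨q, hq, hρ⟩ := exists_heisRicci_neg h₁ h₂
    exact isRicciNegative_heis3_of_heisRicci_neg hq hρ

end RNPaper
end

section
/- Let 𝔫 be the 10-dimensional nilpotent Lie algebra with basis X₁,X₂,X₃, Y₁,Y₂,Y₃, Z₁,Z₂,Z₃,Z₄ and nonzero basis brackets (up to antisymmetry) [X₁,Y₁]=Y₂, [X₁,Y₂]=Y₃, [X₂,Y₁]=Y₃, [X₁,Z₁]=Z₂, [X₂,Z₁]=Z₃, [X₁,Z₂]=Z₄, [X₂,Z₃]=Z₄, [X₁,X₂]=X₃. Then: (a) 𝔫 is 3-step nilpotent and its center is spanned by X₃, Y₃, Z₄; (b) the diagonal maps Diag(0,0,0,1,1,1,0,0,0,0) and Diag(0,0,0,0,0,0,1,1,1,1) (with respect to the ordered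 basis X₁,X₂,X₃,Y₁,Y₂,Y₃,Z₁,Z₂,Z₃,Z₄) are derivations of 𝔫 of positive trace; (c) for every derivation D′ of 𝔫 which is diagonalizable over ℝ, the restriction of D′ to the center of 𝔫 is singular (i.e. has 0 as an eigenvalue). -/
open scoped BigOperators

namespace RNPaper

variable {n : ℕ}

/-- The center `𝔷(𝔫) = {x : [x,𝔫] = 0}`. -/
def centerSet {N : ℕ} (c : SC N) : Set (Fin N → ℝ) := {x | ∀ y, br c x y = 0}

/-- Proposition 4.3 (ii): basis `X₁,X₂,X₃ = e₀,e₁,e₂`, `Y₁,Y₂,Y₃ = e₃,e₄,e₅`,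
`Z₁,…,Z₄ = e₆,…,e₉`. -/
def c16 : SC 10 :=
  brk 0 3 4 1 + brk 0 4 5 1 + brk 1 3 5 1 +
    brk 0 6 7 1 + brk 1 6 8 1 + brk 0 7 9 1 + brk 1 8 9 1 + brk 0 1 2 1

noncomputable def D16a : Matrix (Fin 10) (Fin 10) ℝ :=
  Matrix.diagonal ![0, 0, 0, 1, 1, 1, 0, 0, 0, 0]

noncomputable def D16b : Matrix (Fin 10) (Fin 10) ℝ :=
  Matrix.diagonal ![0, 0, 0, 0, 0, 0, 1, 1, 1, 1]

/-!
Parts (a) and (b) are read off from the bracket of `c16` written in coordinates. For (c), the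
diagonal `d` of any derivation satisfies `d k = d i + d j` whenever `[e i, e j] = e k`. Along the
`Y`-chain this gives `d X₂ = 2 d X₁`, along the `Z`-chain `d X₂ = d X₁`, so
`d X₁ = d X₂ = d X₃ = 0`. As `D Y₃` and `D Z₄` have no `X₃`-component either, `D` maps the
3-dimensional center, which it preserves, into `span {Y₃, Z₄}`, so it is singular there.
-/

open Matrix

lemma brk_apply {i j : Fin n} (hij : i ≠ j) (k : Fin n) (v : ℝ) (p q r : Fin n) :
    brk i j k v p q r =
      (if p = i ∧ q = j ∧ r = k then v else 0) + (if p = j ∧ q = i ∧ r = k then -v else 0) := by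
  unfold brk
  split_ifs <;> simp_all

lemma br_add (c d : SC n) (x y : Fin n → ℝ) : br (c + d) x y = br c x y + br d x y := by
  funext k
  simp only [br, Pi.add_apply, mul_add, Finset.sum_add_distrib]

lemma br_brk {i j : Fin n} (hij : i ≠ j) (k : Fin n) (v : ℝ) (x y : Fin n → ℝ) :
    br (brk i j k v) x y = Pi.single k (v * (x i * y j - x j * y i)) := by
  funext r
  by_cases hr : r = k
  · subst hr
    simp only [br, brk_apply hij, and_true, ite_and, mul_add, mul_ite, mul_zero, mul_neg,
      Finset.sum_add_distrib, Finset.sum_ite_irrel, Finset.sum_ite_eq', Finset.mem_univ,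
      ↓reduceIte, Finset.sum_const_zero, Pi.single_eq_same]
    ring
  · simp [br, brk_apply hij, hr]

lemma IsDeriv.mulVec_mem_centerSet {c : SC n} {D : Matrix (Fin n) (Fin n) ℝ} (hD : IsDeriv c D)
    {x : Fin n → ℝ} (hx : x ∈ centerSet c) : D *ᵥ x ∈ centerSet c := by
  intro y
  have h := hD x y
  rw [hx, hx, mulVec_zero, add_zero] at h
  exact h.symm

lemma IsDeriv.mulVec_br_single {c : SC n} {D : Matrix (Fin n) (Fin n) ℝ} (hD : IsDeriv c D)
    (i j k : Fin n) :
    (D *ᵥ br c (Pi.single i 1) (Pi.single j 1)) k =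
      br c (D.col i) (Pi.single j 1) k + br c (Pi.single i 1) (D.col j) k := by
  simpa [mulVec_single_one] using congrFun (hD (Pi.single i 1) (Pi.single j 1)) k

lemma br_c16 (x y : Fin 10 → ℝ) : br c16 x y =
    ![0, 0, x 0 * y 1 - x 1 * y 0, 0, x 0 * y 3 - x 3 * y 0,
      x 0 * y 4 - x 4 * y 0 + (x 1 * y 3 - x 3 * y 1), 0, x 0 * y 6 - x 6 * y 0,
      x 1 * y 6 - x 6 * y 1, x 0 * y 7 - x 7 * y 0 + (x 1 * y 8 - x 8 * y 1)] := by
  funext k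
  simp only [c16, br_add, br_brk (by decide : (0 : Fin 10) ≠ 3),
    br_brk (by decide : (0 : Fin 10) ≠ 4), br_brk (by decide : (1 : Fin 10) ≠ 3),
    br_brk (by decide : (0 : Fin 10) ≠ 6), br_brk (by decide : (1 : Fin 10) ≠ 6),
    br_brk (by decide : (0 : Fin 10) ≠ 7), br_brk (by decide : (1 : Fin 10) ≠ 8),
    br_brk (by decide : (0 : Fin 10) ≠ 1), Pi.add_apply]
  fin_cases k <;> simp

lemma br_c16_br_br (x y z w : Fin 10 → ℝ) : br c16 x (br c16 y (br c16 z w)) = 0 := by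
  funext k
  fin_cases k <;> simp [br_c16]

lemma nest_c16_two_ne_zero :
    nest c16 (fun m => if m = 0 then Pi.single 3 1 else Pi.single 0 1) 2 ≠ 0 := by
  intro h
  simpa [nest, br_c16] using congrFun h 5

lemma mem_centerSet_c16_iff {x : Fin 10 → ℝ} : x ∈ centerSet c16 ↔
    x 0 = 0 ∧ x 1 = 0 ∧ x 3 = 0 ∧ x 4 = 0 ∧ x 6 = 0 ∧ x 7 = 0 ∧ x 8 = 0 := by
  constructor
  · intro hx
    have h0 : ![0, 0, -x 1, 0, -x 3, -x 4, 0, -x 6, 0, -x 7] = 0 := by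
      simpa [br_c16] using hx (Pi.single 0 1)
    have h1 : ![0, 0, x 0, 0, 0, -x 3, 0, 0, -x 6, -x 8] = 0 := by
      simpa [br_c16] using hx (Pi.single 1 1)
    exact ⟨by simpa using congrFun h1 2, by simpa using congrFun h0 2, by simpa using congrFun h0 4,
      by simpa using congrFun h0 5, by simpa using congrFun h0 7, by simpa using congrFun h0 9,
      by simpa using congrFun h1 9⟩
  · rintro ⟨h0, h1, h3, h4, h6, h7, h8⟩ y
    funext k
    fin_cases k <;> simp [br_c16, *]

lemma centerSet_c16 : centerSet c16 = (Submodule.span ℝ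
    ({Pi.single (2 : Fin 10) (1 : ℝ), Pi.single (5 : Fin 10) (1 : ℝ),
      Pi.single (9 : Fin 10) (1 : ℝ)} : Set (Fin 10 → ℝ)) : Set (Fin 10 → ℝ)) := by
  ext x
  simp only [SetLike.mem_coe, Submodule.mem_span_insert, Submodule.mem_span_singleton,
    mem_centerSet_c16_iff]
  constructor
  · rintro ⟨h0, h1, h3, h4, h6, h7, h8⟩
    refine ⟨x 2, _, ⟨x 5, _, ⟨x 9, rfl⟩, rfl⟩, ?_⟩
    funext k
    fin_cases k <;> simp [*]
  · rintro ⟨a, _, ⟨b, _, ⟨c, rfl⟩, rfl⟩, rfl⟩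
    simp

/-- `diagonal d` is a derivation of `c16` exactly when `d` is additive along the brackets. -/
def IsC16Weight (d : Fin 10 → ℝ) : Prop :=
  d 2 = d 0 + d 1 ∧ d 4 = d 0 + d 3 ∧ d 5 = d 0 + d 4 ∧ d 5 = d 1 + d 3 ∧
    d 7 = d 0 + d 6 ∧ d 8 = d 1 + d 6 ∧ d 9 = d 0 + d 7 ∧ d 9 = d 1 + d 8

lemma isDeriv_diagonal_c16 {d : Fin 10 → ℝ} (hd : IsC16Weight d) :
    IsDeriv c16 (diagonal d) := by
  obtain ⟨h2, h4, h5, h5', h7, h8, h9, h9'⟩ := hd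
  intro x y
  funext k
  fin_cases k <;> simp [br_c16, mulVec_diagonal] <;> grind

lemma IsC16Weight.apply_two {d : Fin 10 → ℝ} (hd : IsC16Weight d) : d 2 = 0 := by
  obtain ⟨h2, h4, h5, h5', h7, h8, h9, h9'⟩ := hd
  linarith

section Derivation

variable {D : Matrix (Fin 10) (Fin 10) ℝ}

lemma IsDeriv.isC16Weight_diag (hD : IsDeriv c16 D) : IsC16Weight D.diag := by
  refine ⟨?_, ?_, ?_, ?_, ?_, ?_, ?_, ?_⟩
  · simpa [br_c16, mulVec, dotProduct, Fin.sum_univ_succ] using hD.mulVec_br_single 0 1 2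
  · simpa [br_c16, mulVec, dotProduct, Fin.sum_univ_succ] using hD.mulVec_br_single 0 3 4
  · simpa [br_c16, mulVec, dotProduct, Fin.sum_univ_succ] using hD.mulVec_br_single 0 4 5
  · simpa [br_c16, mulVec, dotProduct, Fin.sum_univ_succ] using hD.mulVec_br_single 1 3 5
  · simpa [br_c16, mulVec, dotProduct, Fin.sum_univ_succ] using hD.mulVec_br_single 0 6 7
  · simpa [br_c16, mulVec, dotProduct, Fin.sum_univ_succ] using hD.mulVec_br_single 1 6 8
  · simpa [br_c16, mulVec, dotProduct, Fin.sum_univ_succ] using hD.mulVec_br_single 0 7 9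
  · simpa [br_c16, mulVec, dotProduct, Fin.sum_univ_succ] using hD.mulVec_br_single 1 8 9

lemma IsDeriv.c16_row_two_center (hD : IsDeriv c16 D) : D 2 2 = 0 ∧ D 2 5 = 0 ∧ D 2 9 = 0 := by
  have h14 : D 1 4 = 0 := by
    simpa [br_c16, mulVec, dotProduct, Fin.sum_univ_succ] using hD.mulVec_br_single 0 3 1
  have h25 : D 2 5 = D 1 4 := by
    simpa [br_c16, mulVec, dotProduct, Fin.sum_univ_succ] using hD.mulVec_br_single 0 4 2
  have h17 : D 1 7 = 0 := by
    simpa [br_c16, mulVec, dotProduct, Fin.sum_univ_succ] using hD.mulVec_br_single 0 6 1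
  have h29 : D 2 9 = D 1 7 := by
    simpa [br_c16, mulVec, dotProduct, Fin.sum_univ_succ] using hD.mulVec_br_single 0 7 2
  exact ⟨hD.isC16Weight_diag.apply_two, h25.trans h14, h29.trans h17⟩

lemma IsDeriv.exists_mem_centerSet_c16_mulVec_eq_zero (hD : IsDeriv c16 D) :
    ∃ x ∈ centerSet c16, x ≠ 0 ∧ D *ᵥ x = 0 := by
  obtain ⟨h22, h25, h29⟩ := hD.c16_row_two_center
  -- the matrix of `D` on the center in the basis `X₃, Y₃, Z₄` has a zero first row
  obtain ⟨t, ht, hMt⟩ := exists_mulVec_eq_zero_iff.2 <|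
    det_eq_zero_of_row_eq_zero (A := D.submatrix ![2, 5, 9] ![2, 5, 9]) 0 fun j => by
      fin_cases j
      exacts [h22, h25, h29]
  let x : Fin 10 → ℝ := ![0, 0, t 0, 0, 0, t 1, 0, 0, 0, t 2]
  have hx : x ∈ centerSet c16 := mem_centerSet_c16_iff.2 (by simp [x])
  have hDx := mem_centerSet_c16_iff.1 (hD.mulVec_mem_centerSet hx)
  refine ⟨x, hx, fun h => ht ?_, ?_⟩
  · funext i
    fin_cases i
    exacts [congrFun h 2, congrFun h 5, congrFun h 9]
  · have hDx_sub : ∀ i, (D *ᵥ x) (![2, 5, 9] i) = (D.submatrix ![2, 5, 9] ![2, 5, 9] *ᵥ t) i := by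
      intro i
      fin_cases i <;> simp [x, mulVec, dotProduct, Fin.sum_univ_succ]
    obtain ⟨h0, h1, h3, h4, h6, h7, h8⟩ := hDx
    funext k
    fin_cases k
    exacts [h0, h1, (hDx_sub 0).trans (congrFun hMt 0), h3, h4, (hDx_sub 1).trans (congrFun hMt 1),
      h6, h7, h8, (hDx_sub 2).trans (congrFun hMt 2)]

end Derivation

theorem statement16 :
    ((∀ v : ℕ → (Fin 10 → ℝ), nest c16 v 3 = 0) ∧
      (∃ v : ℕ → (Fin 10 → ℝ), nest c16 v 2 ≠ 0) ∧
      centerSet c16 = (Submodule.span ℝ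
        ({Pi.single (2 : Fin 10) (1 : ℝ), Pi.single (5 : Fin 10) (1 : ℝ),
          Pi.single (9 : Fin 10) (1 : ℝ)} : Set (Fin 10 → ℝ)) : Set (Fin 10 → ℝ))) ∧
    (IsDeriv c16 D16a ∧ 0 < D16a.trace ∧ IsDeriv c16 D16b ∧ 0 < D16b.trace) ∧
    (∀ D' : Matrix (Fin 10) (Fin 10) ℝ, IsDeriv c16 D' → IsDiagonalizableR D' →
      ∃ x : Fin 10 → ℝ, x ∈ centerSet c16 ∧ x ≠ 0 ∧ D'.mulVec x = 0) := by
  refine ⟨⟨fun v => br_c16_br_br _ _ _ _, ⟨_, nest_c16_two_ne_zero⟩, centerSet_c16⟩,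
    ⟨isDeriv_diagonal_c16 (by simp [IsC16Weight, cons_val]), ?_,
      isDeriv_diagonal_c16 (by simp [IsC16Weight, cons_val]), ?_⟩,
    fun D' hD' _ => hD'.exists_mem_centerSet_c16_mulVec_eq_zero⟩
  · norm_num [D16a, trace, Fin.sum_univ_succ]
  · norm_num [D16b, trace, Fin.sum_univ_succ]

end RNPaper
end
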